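/- arXiv:math/0407408 — 5 statements merged into one kernel-verified Lean document; each statement's English description precedes it below -/
import Mathlib

section
/- Let d ≥ 2 and let x_1 < y_1 < x_2 < y_2 < ... < x_{d-1} < y_{d-1} be 2(d-1) real numbers. Then there exists a unique real polynomial p of the form p(z) = z^n + c_{n-1}z^{n-1} + ... + c_1 z (monic, zero constant term) with 2 ≤ n ≤ d such that p(x_j) = p(y_j) for all j = 1, ..., d-1. -/
/-!
The conditions `p 0 = 0` and `p (x j) = p (y j)` are `d - 1 + 1 = d` linear conditions cutting out
a subspace of the polynomials of degree at most `d`, which has dimension `d + 1`; so it contains a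
nonzero polynomial. By Rolle's theorem the derivative of any nonzero polynomial in this subspace has
a root in each of the `d - 1` disjoint intervals `(x j, y j)`, so the polynomial has degree at least
`d`. Hence the subspace meets the polynomials of degree at most `d` in a line spanned by a
polynomial of degree exactly `d`, and this line contains exactly one monic polynomial.
-/

open Function Polynomial Set

section

variable {K ι : Type*} [Field K]

def pairEqualizer (x y : ι → K) : Submodule K K[X] where
  carrier := {p | p.coeff 0 = 0 ∧ ∀ j, p.eval (x j) = p.eval (y j)}
  add_mem' := by
    rintro p q ⟨hp0, hp⟩ ⟨hq0, hq⟩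
    exact ⟨by simp [hp0, hq0], fun j => by simp [hp j, hq j]⟩
  zero_mem' := by simp
  smul_mem' := by
    rintro c p ⟨hp0, hp⟩
    exact ⟨by simp [hp0], fun j => by simp [hp j]⟩

/-- Polynomials `X * q` with `deg q < d` form a `d`-dimensional space, and the `card ι`
conditions `p (x j) = p (y j)` cannot cut it down to zero. -/
theorem exists_ne_zero_mem_pairEqualizer [Fintype ι] (x y : ι → K) {d : ℕ}
    (hd : Fintype.card ι < d) : ∃ p ∈ pairEqualizer x y, p ≠ 0 ∧ p.natDegree ≤ d := by
  let f : degreeLT K d →ₗ[K] ι → K :=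
    (LinearMap.pi fun j => leval (x j) - leval (y j)) ∘ₗ LinearMap.mulLeft K X ∘ₗ
      (degreeLT K d).subtype
  have hker : LinearMap.ker f ≠ ⊥ := LinearMap.ker_ne_bot_of_finrank_lt <| by
    rwa [(degreeLTEquiv K d).finrank_eq, Module.finrank_fin_fun, Module.finrank_fintype_fun_eq_card]
  obtain ⟨⟨q, hq⟩, hqf, hq0⟩ := (Submodule.ne_bot_iff _).mp hker
  have hq0 : q ≠ 0 := by simpa using hq0
  refine ⟨X * q, ⟨coeff_X_mul_zero q, fun j => sub_eq_zero.mp (congrFun hqf j)⟩,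
    mul_ne_zero X_ne_zero hq0, ?_⟩
  rw [natDegree_X_mul hq0, Nat.add_one_le_iff, natDegree_lt_iff_degree_lt hq0]
  exact mem_degreeLT.mp hq

end

theorem pairwise_disjoint_Ioo_of_interlaced {ι α : Type*} [LinearOrder ι] [LinearOrder α]
    {x y : ι → α} (hinter : ∀ j k, j < k → y j < x k) :
    Pairwise (Disjoint on fun j => Ioo (x j) (y j)) :=
  (pairwise_disjoint_on _).mpr fun j k hjk =>
    disjoint_left.mpr fun _ ht ht' => (ht.2.trans ((hinter j k hjk).trans ht'.1)).false

section

variable {ι : Type*} [Fintype ι] {x y : ι → ℝ}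

/-- Rolle's theorem puts a root of `p'` in each interval `(x j, y j)`. -/
theorem card_le_natDegree_derivative (hxy : ∀ j, x j < y j)
    (hdisj : Pairwise (Disjoint on fun j => Ioo (x j) (y j))) {p : ℝ[X]}
    (hp : derivative p ≠ 0) (heq : ∀ j, p.eval (x j) = p.eval (y j)) :
    Fintype.card ι ≤ (derivative p).natDegree := by
  have hrolle : ∀ j, ∃ z ∈ Ioo (x j) (y j), (derivative p).IsRoot z := fun j => by
    obtain ⟨z, hz, hroot⟩ := exists_deriv_eq_zero (hxy j) p.continuousOn (heq j)
    exact ⟨z, hz, by rwa [Polynomial.deriv] at hroot⟩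
  choose z hz hroot using hrolle
  have hinj : Injective z := fun j k hjk => by_contra fun hne =>
    disjoint_left.mp (hdisj hne) (hz j) (hjk ▸ hz k)
  calc Fintype.card ι = (Finset.univ.image z).card := (Finset.card_image_of_injective _ hinj).symm
    _ ≤ (derivative p).natDegree := card_le_degree_of_subset_roots fun t ht => by
      obtain ⟨j, -, rfl⟩ := Finset.mem_image.mp ht
      exact (mem_roots hp).mpr (hroot j)

theorem card_lt_natDegree_of_mem_pairEqualizer (hxy : ∀ j, x j < y j)
    (hdisj : Pairwise (Disjoint on fun j => Ioo (x j) (y j))) {p : ℝ[X]}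
    (hp : p ∈ pairEqualizer x y) (hp0 : p ≠ 0) : Fintype.card ι < p.natDegree := by
  have hdeg : p.natDegree ≠ 0 := fun h => hp0 <| by
    rw [eq_C_of_natDegree_eq_zero h, hp.1, map_zero]
  have hp' : derivative p ≠ 0 := mt derivative_eq_zero.mp hdeg
  have := card_le_natDegree_derivative hxy hdisj hp' hp.2
  have := natDegree_derivative_le p
  omega

end

theorem existsUnique_monic_mem_of_forall_le_natDegree {K : Type*} [Field K]
    (S : Submodule K K[X]) {d : ℕ} (hmin : ∀ p ∈ S, p ≠ 0 → d ≤ p.natDegree)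
    (hex : ∃ p ∈ S, p ≠ 0 ∧ p.natDegree ≤ d) :
    ∃! p, p ∈ S ∧ p.Monic ∧ p.natDegree = d := by
  have huniq : ∀ p ∈ S, p.Monic → p.natDegree = d →
      ∀ q ∈ S, q.Monic → q.natDegree = d → p = q := by
    intro p hpS hpm hpd q hqS hqm hqd
    by_contra hne
    have hsub0 : p - q ≠ 0 := sub_ne_zero.mpr hne
    have hdeg : (p - q).degree < p.degree := degree_sub_lt_left
      (by rw [degree_eq_natDegree hpm.ne_zero, degree_eq_natDegree hqm.ne_zero, hpd, hqd])
      hpm.ne_zero (by rw [hpm.leadingCoeff, hqm.leadingCoeff])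
    have := natDegree_lt_natDegree hsub0 hdeg
    have := hmin _ (S.sub_mem hpS hqS) hsub0
    omega
  obtain ⟨p, hpS, hp0, hpd⟩ := hex
  have hlc : (leadingCoeff p)⁻¹ ≠ 0 := inv_ne_zero (leadingCoeff_ne_zero.mpr hp0)
  have hmem : p * C (leadingCoeff p)⁻¹ ∈ S := by
    rw [mul_comm, ← smul_eq_C_mul]
    exact S.smul_mem _ hpS
  have hdeg : (p * C (leadingCoeff p)⁻¹).natDegree = d := by
    rw [natDegree_mul_C hlc]
    exact le_antisymm hpd (hmin p hpS hp0)
  have hmon := monic_mul_leadingCoeff_inv hp0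
  exact ⟨_, ⟨hmem, hmon, hdeg⟩,
    fun q ⟨hqS, hqm, hqd⟩ => huniq q hqS hqm hqd _ hmem hmon hdeg⟩

/-- For `d ≥ 2` and interlaced reals
`x 0 < y 0 < x 1 < y 1 < … < x (d-2) < y (d-2)`, there is a unique real polynomial `p`
of the form `z^n + c_{n-1} z^{n-1} + … + c_1 z` (monic, zero constant term) with
`2 ≤ n ≤ d` such that `p (x j) = p (y j)` for all `j`. -/
theorem unique_monic_polynomial_constant_on_pairs
    (d : ℕ) (hd : 2 ≤ d) (x y : Fin (d - 1) → ℝ)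
    (hxy : ∀ j, x j < y j)
    (hinter : ∀ j k : Fin (d - 1), j < k → y j < x k) :
    ∃! p : Polynomial ℝ,
      (∃ n : ℕ, 2 ≤ n ∧ n ≤ d ∧ p.Monic ∧ p.natDegree = n ∧ p.coeff 0 = 0) ∧
      ∀ j, p.eval (x j) = p.eval (y j) := by
  have hmin : ∀ p ∈ pairEqualizer x y, p ≠ 0 → d ≤ p.natDegree := fun p hp hp0 => by
    have := card_lt_natDegree_of_mem_pairEqualizer hxy
      (pairwise_disjoint_Ioo_of_interlaced hinter) hp hp0
    rw [Fintype.card_fin] at this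
    omega
  have hex := exists_ne_zero_mem_pairEqualizer x y (d := d) (by rw [Fintype.card_fin]; omega)
  refine (existsUnique_congr fun p => ?_).mpr
    (existsUnique_monic_mem_of_forall_le_natDegree _ hmin hex)
  constructor
  · rintro ⟨⟨n, -, hnd, hpm, rfl, hp0⟩, heq⟩
    exact ⟨⟨hp0, heq⟩, hpm, le_antisymm hnd (hmin p ⟨hp0, heq⟩ hpm.ne_zero)⟩
  · rintro ⟨⟨hp0, heq⟩, hpm, hpd⟩
    exact ⟨⟨d, hd, le_rfl, hpm, hpd, hp0⟩, heq⟩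
end

section
/- For 1 ≤ a ≤ d-1, the number of semistandard Young tableaux of shape 2×(d-1) with content (a, 1, 1, ..., 1) (the entry 1 appearing a times and each of the entries 2, 3, ..., 2d-1-a appearing exactly once) equals ((a+1)/d)·binomial(2d-2-a, d-1). -/
/-!
Write `m = d - 1` and `N = 2m - a`. Each entry `2, …, N + 1` occurs exactly once, so a tableau is
determined by the set `A ⊆ range N` of the entries of its second row, shifted down by 2; its first
row is then `a` ones followed by `B = range N \ A` in increasing order. Column strictness says
that the `(i - a)`-th element of `B` is smaller than the `i`-th element of `A`; counting the
elements of `A` and of `B` below the latter turns this into the ballot condition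
`2 #{y ∈ A | y < x} < x + a` for `x ∈ A`. Splitting ballot sets on whether they contain `N - 1`
gives Pascal's recurrence, hence the reflection formula `#ballot = C(N, m) - C(N, m + 1)`, and
`(m + 1) C(N, m + 1) = (m - a) C(N, m)` finishes.
-/

/-- The number of cells of a `2 × m` tableau `T` carrying the entry `k`. -/
def entryCount {m : ℕ} (T : Fin 2 → Fin m → ℕ) (k : ℕ) : ℕ :=
  (Finset.univ.filter fun c : Fin 2 × Fin m => T c.1 c.2 = k).card

open Finset

def IsBallot (a : ℕ) (A : Finset ℕ) : Prop :=
  ∀ x ∈ A, 2 * #{y ∈ A | y < x} < x + a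

instance (a : ℕ) : DecidablePred (IsBallot a) := fun _ => by unfold IsBallot; infer_instance

def ballotSet (n t a : ℕ) : Finset (Finset ℕ) :=
  {A ∈ powersetCard t (range n) | IsBallot a A}

lemma mem_ballotSet {n t a : ℕ} {A : Finset ℕ} :
    A ∈ ballotSet n t a ↔ A ⊆ range n ∧ #A = t ∧ IsBallot a A := by
  rw [ballotSet, mem_filter, mem_powersetCard, and_assoc]

lemma isBallot_insert {a n : ℕ} {A : Finset ℕ} (hA : ∀ y ∈ A, y < n) :
    IsBallot a (insert n A) ↔ IsBallot a A ∧ 2 * #A < n + a := by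
  have hbelow : {y ∈ insert n A | y < n} = A := by
    rw [filter_insert, if_neg (lt_irrefl n), filter_true_of_mem hA]
  have hsmall : ∀ x ∈ A, {y ∈ insert n A | y < x} = {y ∈ A | y < x} := fun x hx => by
    rw [filter_insert, if_neg (hA x hx).asymm]
  simp only [IsBallot, forall_mem_insert, hbelow]
  rw [and_comm]
  exact and_congr_left' (forall₂_congr fun x hx => by rw [hsmall x hx])

lemma IsBallot.two_mul_card_le {a n : ℕ} {A : Finset ℕ} (h : IsBallot a A)
    (hA : A ⊆ range n) : 2 * #A ≤ n + a := by
  induction A using Finset.induction_on_max with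
  | empty => simp
  | insert x A hlt _ =>
    rw [isBallot_insert hlt] at h
    have := mem_range.1 (hA (mem_insert_self x A))
    have := card_insert_le x A
    omega

lemma ballotSet_eq_empty {n t a : ℕ} (h : n + a < 2 * t) : ballotSet n t a = ∅ := by
  refine filter_false_of_mem fun A hA hballot => ?_
  rw [mem_powersetCard] at hA
  have := hballot.two_mul_card_le hA.1
  omega

lemma ballotSet_zero {n a : ℕ} : ballotSet n 0 a = {∅} := by
  simp [ballotSet, IsBallot]

lemma card_ballotSet_succ_succ {n t a : ℕ} (h : 2 * t < n + a) :
    #(ballotSet (n + 1) (t + 1) a) = #(ballotSet n (t + 1) a) + #(ballotSet n t a) := by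
  have hsplit : ballotSet (n + 1) (t + 1) a =
      ballotSet n (t + 1) a ∪ (ballotSet n t a).image (insert n) := by
    rw [ballotSet, range_add_one, powersetCard_succ_insert notMem_range_self, filter_union,
      filter_image, ballotSet, ballotSet]
    congr 2
    refine filter_congr fun A hA => ?_
    rw [mem_powersetCard] at hA
    rw [isBallot_insert fun y hy => mem_range.1 (hA.1 hy), hA.2]
    simp [h]
  have hnotMem : ∀ s, ∀ A ∈ ballotSet n s a, n ∉ A := fun s A hA hn => by
    simp only [ballotSet, mem_filter, mem_powersetCard] at hA
    simpa using hA.1.1 hn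
  rw [hsplit, card_union_of_disjoint, card_image_of_injOn]
  · intro A hA A' hA' heq
    rw [← erase_insert (hnotMem t A hA), ← erase_insert (hnotMem t A' hA')]
    exact congrArg (·.erase n) heq
  · rw [disjoint_right]
    intro A hA hA'
    obtain ⟨A, -, rfl⟩ := mem_image.1 hA
    exact hnotMem _ _ hA' (mem_insert_self n A)

/-- `C(n, n + a + 1 - t)` is `C(n, t - a - 1)` when `a < t ≤ n`; written this way the identity
survives truncated subtraction for every `t` with `2t ≤ n + a + 1`. -/
theorem card_ballotSet_add_choose {n t a : ℕ} (h : 2 * t ≤ n + a + 1) :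
    #(ballotSet n t a) + n.choose (n + a + 1 - t) = n.choose t := by
  induction n generalizing t with
  | zero =>
    cases t with
    | zero => simp [ballotSet_zero]
    | succ t =>
      rw [ballotSet, powersetCard_eq_empty.2 (by simp), Nat.choose_eq_zero_of_lt (by omega)]
      simp
  | succ n ih =>
    cases t with
    | zero => simp [ballotSet_zero, Nat.choose_eq_zero_of_lt]
    | succ t =>
      by_cases ht : 2 * t < n + a
      · have ih₁ := ih (t := t + 1) (by omega)
        have ih₂ := ih (t := t) (by omega)
        rw [card_ballotSet_succ_succ ht, show n + 1 + a + 1 - (t + 1) = n + a - t + 1 by omega,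
          Nat.choose_succ_succ', Nat.choose_succ_succ']
        rw [show n + a + 1 - (t + 1) = n + a - t by omega] at ih₁
        rw [show n + a + 1 - t = n + a - t + 1 by omega] at ih₂
        omega
      · rw [ballotSet_eq_empty (by omega), show n + 1 + a + 1 - (t + 1) = t + 1 by omega]
        simp

theorem succ_mul_card_ballotSet {m a : ℕ} (ha : a ≤ m) :
    (m + 1) * #(ballotSet (2 * m - a) m a) = (a + 1) * (2 * m - a).choose m := by
  have hcount := card_ballotSet_add_choose (n := 2 * m - a) (t := m) (a := a) (by omega)
  have hpascal := Nat.choose_succ_right_eq (2 * m - a) m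
  rw [show 2 * m - a + a + 1 - m = m + 1 by omega] at hcount
  rw [show 2 * m - a - m = m - a by omega] at hpascal
  zify [ha] at hcount hpascal ⊢
  linear_combination (↑m + 1 : ℤ) * hcount - hpascal

lemma Fin.mem_iff_lt_card_of_isLowerSet {m : ℕ} {F : Finset (Fin m)}
    (hF : IsLowerSet (F : Set (Fin m))) (j : Fin m) : j ∈ F ↔ (j : ℕ) < #F := by
  constructor
  · intro hj
    have : Iic j ⊆ F := fun j' hj' => hF (mem_Iic.1 hj') hj
    simpa using card_le_card this
  · intro hlt
    by_contra hj
    have : F ⊆ Iio j := fun j' hj' => mem_Iio.2 (lt_of_not_ge fun hle => hj (hF hle hj'))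
    simpa using (card_le_card this).trans_lt' hlt

section OrderEmbOfFin

variable {A : Finset ℕ} {m : ℕ} (hA : #A = m)

lemma card_filter_lt_eq_card_filter_orderEmbOfFin (x : ℕ) :
    #{y ∈ A | y < x} = #{j | A.orderEmbOfFin hA j < x} := by
  conv_lhs => rw [← image_orderEmbOfFin_univ A hA, filter_image]
  exact card_image_of_injective _ (A.orderEmbOfFin hA).injective

lemma orderEmbOfFin_lt_iff (i : Fin m) (x : ℕ) :
    A.orderEmbOfFin hA i < x ↔ (i : ℕ) < #{y ∈ A | y < x} := by
  rw [card_filter_lt_eq_card_filter_orderEmbOfFin hA, ← Fin.mem_iff_lt_card_of_isLowerSet,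
    mem_filter, and_iff_right (mem_univ i)]
  intro j j' hle hj
  simp only [coe_filter, mem_univ, true_and, Set.mem_ofPred_eq] at hj ⊢
  exact ((A.orderEmbOfFin hA).monotone hle).trans_lt hj

lemma card_filter_lt_orderEmbOfFin (i : Fin m) : #{y ∈ A | y < A.orderEmbOfFin hA i} = i := by
  simp [card_filter_lt_eq_card_filter_orderEmbOfFin hA, filter_gt_eq_Iio]

lemma card_filter_orderEmbOfFin_eq (v : ℕ) :
    #{j | A.orderEmbOfFin hA j = v} = if v ∈ A then 1 else 0 := by
  split_ifs with hv
  · obtain ⟨i, rfl⟩ : v ∈ Set.range (A.orderEmbOfFin hA) := by rwa [range_orderEmbOfFin]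
    exact card_eq_one.2 ⟨i, by ext; simp⟩
  · exact card_eq_zero.2 (filter_false_of_mem fun j _ hj => hv (hj ▸ orderEmbOfFin_mem A hA j))

lemma isBallot_iff_forall_orderEmbOfFin {a : ℕ} :
    IsBallot a A ↔ ∀ i : Fin m, 2 * (i : ℕ) < A.orderEmbOfFin hA i + a := by
  have hrange : ∀ x, x ∈ A ↔ x ∈ Set.range (A.orderEmbOfFin hA) := by
    simp [range_orderEmbOfFin]
  simp_rw [IsBallot, hrange, Set.forall_mem_range, card_filter_lt_orderEmbOfFin hA]

end OrderEmbOfFin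

lemma card_range_sdiff {A : Finset ℕ} {m a : ℕ} (hAN : A ⊆ range (2 * m - a)) (hA : #A = m) :
    #(range (2 * m - a) \ A) = m - a := by
  rw [card_sdiff_of_subset hAN, card_range, hA]
  omega

lemma card_filter_sdiff_lt_add_card_filter_lt {A : Finset ℕ} {N x : ℕ} (hx : x ≤ N) :
    #{y ∈ range N \ A | y < x} + #{y ∈ A | y < x} = x := by
  have h₁ : {y ∈ range N \ A | y < x} = range x \ A := by
    ext y
    simp only [mem_filter, mem_sdiff, mem_range]
    grind
  have h₂ : {y ∈ A | y < x} = range x ∩ A := by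
    ext y
    simp [and_comm]
  rw [h₁, h₂, card_sdiff_add_card_inter, card_range]

theorem forall_orderEmbOfFin_lt_iff_isBallot {A B : Finset ℕ} {m a N : ℕ}
    (hAN : A ⊆ range N) (hBA : B = range N \ A) (hA : #A = m) (hB : #B = m - a) :
    (∀ (i : Fin m) (hi : a ≤ (i : ℕ)),
      B.orderEmbOfFin hB ⟨i - a, by omega⟩ < A.orderEmbOfFin hA i) ↔ IsBallot a A := by
  subst hBA
  rw [isBallot_iff_forall_orderEmbOfFin hA]
  refine forall_congr' fun i => ?_
  have hsplit := card_filter_sdiff_lt_add_card_filter_lt (A := A)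
    (mem_range.1 (hAN (orderEmbOfFin_mem A hA i))).le
  rw [card_filter_lt_orderEmbOfFin hA i] at hsplit
  simp only [orderEmbOfFin_lt_iff hB]
  constructor
  · intro h
    by_cases hi : a ≤ (i : ℕ)
    · have := h hi
      omega
    · omega
  · intro h hi
    omega

lemma entryCount_eq_add {m : ℕ} (T : Fin 2 → Fin m → ℕ) (k : ℕ) :
    entryCount T k = #{j | T 0 j = k} + #{j | T 1 j = k} := by
  simp only [entryCount, card_filter, ← univ_product_univ, sum_product, Fin.sum_univ_two]

def IsTwoRowSSYT (m a : ℕ) (T : Fin 2 → Fin m → ℕ) : Prop :=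
  (∀ i, Monotone (T i)) ∧ (∀ j, T 0 j < T 1 j) ∧ entryCount T 1 = a ∧
    (∀ k, 2 ≤ k → k ≤ 2 * m + 1 - a → entryCount T k = 1) ∧
    (∀ i j, 1 ≤ T i j ∧ T i j ≤ 2 * m + 1 - a)

def tableauOf (a : ℕ) {m : ℕ} (A B : Finset ℕ) (hA : #A = m) (hB : #B = m - a) :
    Fin 2 → Fin m → ℕ :=
  ![fun j => if h : a ≤ (j : ℕ) then B.orderEmbOfFin hB ⟨j - a, by omega⟩ + 2 else 1,
    fun j => A.orderEmbOfFin hA j + 2]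

section tableauOf

variable {m a : ℕ} {A B : Finset ℕ} (hA : #A = m) (hB : #B = m - a)

lemma tableauOf_zero_of_lt {j : Fin m} (hj : (j : ℕ) < a) : tableauOf a A B hA hB 0 j = 1 := by
  simp [tableauOf, hj]

lemma tableauOf_zero_of_le {j : Fin m} (hj : a ≤ (j : ℕ)) :
    tableauOf a A B hA hB 0 j = B.orderEmbOfFin hB ⟨j - a, by omega⟩ + 2 := by
  simp [tableauOf, hj]

lemma tableauOf_one (j : Fin m) : tableauOf a A B hA hB 1 j = A.orderEmbOfFin hA j + 2 := rfl

lemma one_le_tableauOf (i : Fin 2) (j : Fin m) : 1 ≤ tableauOf a A B hA hB i j := by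
  fin_cases i
  · by_cases hj : a ≤ (j : ℕ)
    · simp [tableauOf_zero_of_le hA hB hj]
    · simp [tableauOf_zero_of_lt hA hB (not_le.1 hj)]
  · simp [tableauOf_one]

lemma tableauOf_le {N : ℕ} (hAN : A ⊆ range N) (hBN : B ⊆ range N) (i : Fin 2) (j : Fin m) :
    tableauOf a A B hA hB i j ≤ N + 1 := by
  fin_cases i
  · by_cases hj : a ≤ (j : ℕ)
    · simpa [tableauOf_zero_of_le hA hB hj] using hBN (orderEmbOfFin_mem B hB _)
    · simp [tableauOf_zero_of_lt hA hB (not_le.1 hj)]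
  · simpa [tableauOf_one] using hAN (orderEmbOfFin_mem A hA _)

lemma monotone_tableauOf (i : Fin 2) : Monotone (tableauOf a A B hA hB i) := by
  revert i
  refine Fin.forall_fin_two.2 ⟨fun j j' hjj' => ?_, fun j j' hjj' => ?_⟩
  · by_cases hj : a ≤ (j : ℕ)
    · have hj' : a ≤ (j' : ℕ) := hj.trans hjj'
      rw [tableauOf_zero_of_le hA hB hj, tableauOf_zero_of_le hA hB hj', add_le_add_iff_right]
      exact (B.orderEmbOfFin hB).monotone (Fin.mk_le_mk.2 (by omega))
    · rw [tableauOf_zero_of_lt hA hB (not_le.1 hj)]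
      exact one_le_tableauOf hA hB 0 j'
  · simpa [tableauOf_one] using (A.orderEmbOfFin hA).monotone hjj'

lemma card_filter_tableauOf_zero {k : ℕ} (hk : 2 ≤ k) :
    #{j | tableauOf a A B hA hB 0 j = k} = #{i | B.orderEmbOfFin hB i = k - 2} := by
  symm
  refine card_bij (fun i _ => ⟨i + a, by omega⟩) (fun i hi => ?_) (fun i _ i' _ h => ?_)
    (fun j hj => ?_)
  · simp only [mem_filter, mem_univ, true_and] at hi ⊢
    rw [tableauOf_zero_of_le hA hB (by simp)]
    simp only [Nat.add_sub_cancel, Fin.eta]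
    omega
  · simpa [Fin.ext_iff] using h
  · simp only [mem_filter, mem_univ, true_and] at hj
    have hja : a ≤ (j : ℕ) := by
      by_contra hja
      rw [tableauOf_zero_of_lt hA hB (not_le.1 hja)] at hj
      omega
    rw [tableauOf_zero_of_le hA hB hja] at hj
    exact ⟨⟨j - a, by omega⟩, by simp only [mem_filter, mem_univ, true_and]; omega,
      Fin.ext (by simp; omega)⟩

lemma entryCount_tableauOf_one (ham : a ≤ m) : entryCount (tableauOf a A B hA hB) 1 = a := by
  have hrow₀ : #{j | tableauOf a A B hA hB 0 j = 1} = #{j : Fin m | (j : ℕ) < a} := by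
    congr 1
    refine filter_congr fun j _ => ?_
    by_cases hj : a ≤ (j : ℕ)
    · simp [tableauOf_zero_of_le hA hB hj, hj]
    · simp [tableauOf_zero_of_lt hA hB (not_le.1 hj), not_le.1 hj]
  rw [entryCount_eq_add, hrow₀, Fin.card_filter_val_lt, min_eq_right ham]
  simp [tableauOf_one]

lemma entryCount_tableauOf_of_two_le {k : ℕ} (hk : 2 ≤ k) :
    entryCount (tableauOf a A B hA hB) k =
      (if k - 2 ∈ B then 1 else 0) + (if k - 2 ∈ A then 1 else 0) := by
  have hrow₁ : #{j | tableauOf a A B hA hB 1 j = k} = #{j | A.orderEmbOfFin hA j = k - 2} := by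
    congr 1
    exact filter_congr fun j _ => by rw [tableauOf_one]; omega
  rw [entryCount_eq_add, card_filter_tableauOf_zero hA hB hk, hrow₁,
    card_filter_orderEmbOfFin_eq, card_filter_orderEmbOfFin_eq]

lemma tableauOf_zero_lt_one_iff {N : ℕ} (hAN : A ⊆ range N) (hBA : B = range N \ A) :
    (∀ j, tableauOf a A B hA hB 0 j < tableauOf a A B hA hB 1 j) ↔ IsBallot a A := by
  rw [← forall_orderEmbOfFin_lt_iff_isBallot hAN hBA hA hB]
  refine forall_congr' fun j => ?_
  rw [tableauOf_one]
  by_cases hj : a ≤ (j : ℕ)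
  · simp [tableauOf_zero_of_le hA hB hj, hj]
  · simp [tableauOf_zero_of_lt hA hB (not_le.1 hj), hj]

theorem isTwoRowSSYT_tableauOf_iff (ham : a ≤ m) (hAN : A ⊆ range (2 * m - a))
    (hBA : B = range (2 * m - a) \ A) :
    IsTwoRowSSYT m a (tableauOf a A B hA hB) ↔ IsBallot a A := by
  rw [IsTwoRowSSYT, tableauOf_zero_lt_one_iff hA hB hAN hBA]
  refine ⟨fun h => h.2.1, fun hballot => ⟨monotone_tableauOf hA hB, hballot,
    entryCount_tableauOf_one hA hB ham, fun k hk hkN => ?_,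
    fun i j => ⟨one_le_tableauOf hA hB i j, ?_⟩⟩⟩
  · have hkN' : k - 2 ∈ range (2 * m - a) := mem_range.2 (by omega)
    rw [entryCount_tableauOf_of_two_le hA hB hk, hBA]
    by_cases hkA : k - 2 ∈ A <;> simp [hkA, hkN']
  · have := tableauOf_le hA hB hAN (hBA ▸ sdiff_subset) i j
    omega

end tableauOf

def secondRowSet {m : ℕ} (T : Fin 2 → Fin m → ℕ) : Finset ℕ :=
  univ.image fun j => T 1 j - 2

lemma secondRowSet_tableauOf {m a : ℕ} {A B : Finset ℕ} (hA : #A = m) (hB : #B = m - a) :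
    secondRowSet (tableauOf a A B hA hB) = A := by
  simp [secondRowSet, tableauOf_one, image_orderEmbOfFin_univ]

namespace IsTwoRowSSYT

variable {m a : ℕ} {T : Fin 2 → Fin m → ℕ}

lemma one_le (hT : IsTwoRowSSYT m a T) (i : Fin 2) (j : Fin m) : 1 ≤ T i j :=
  (hT.2.2.2.2 i j).1

lemma le (hT : IsTwoRowSSYT m a T) (i : Fin 2) (j : Fin m) : T i j ≤ 2 * m + 1 - a :=
  (hT.2.2.2.2 i j).2

lemma two_le_one (hT : IsTwoRowSSYT m a T) (j : Fin m) : 2 ≤ T 1 j := by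
  have := hT.2.1 j
  have := hT.one_le 0 j
  omega

lemma eq_of_apply_eq (hT : IsTwoRowSSYT m a T) {c c' : Fin 2 × Fin m} (hc : 2 ≤ T c.1 c.2)
    (h : T c.1 c.2 = T c'.1 c'.2) : c = c' :=
  card_le_one.1 (hT.2.2.2.1 _ hc (hT.le c.1 c.2)).le c (by simp) c' (by simp [h])

lemma zero_eq_one_iff (hT : IsTwoRowSSYT m a T) (j : Fin m) : T 0 j = 1 ↔ (j : ℕ) < a := by
  have hcard : #{j | T 0 j = 1} = a := by
    have hrow₁ : #{j | T 1 j = 1} = 0 :=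
      card_eq_zero.2 (filter_false_of_mem fun j _ hj => by have := hT.two_le_one j; omega)
    rw [← hT.2.2.1, entryCount_eq_add, hrow₁, add_zero]
  rw [← hcard, ← Fin.mem_iff_lt_card_of_isLowerSet, mem_filter, and_iff_right (mem_univ j)]
  intro j j' hle hj
  simp only [coe_filter, mem_univ, true_and, Set.mem_ofPred_eq] at hj ⊢
  have := hT.1 0 hle
  have := hT.one_le 0 j'
  omega

lemma two_le_zero (hT : IsTwoRowSSYT m a T) {j : Fin m} (hj : a ≤ (j : ℕ)) : 2 ≤ T 0 j := by
  have := hT.one_le 0 j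
  have := (hT.zero_eq_one_iff j).not.2 (not_lt.2 hj)
  omega

lemma strictMono_one (hT : IsTwoRowSSYT m a T) : StrictMono (T 1) :=
  (hT.1 1).strictMono_of_injective fun j j' h => by
    simpa using hT.eq_of_apply_eq (c := (1, j)) (c' := (1, j')) (hT.two_le_one j) h

lemma card_secondRowSet (hT : IsTwoRowSSYT m a T) : #(secondRowSet T) = m := by
  rw [secondRowSet, card_image_of_injective, card_univ, Fintype.card_fin]
  intro j j' h
  have := hT.two_le_one j
  have := hT.two_le_one j'
  exact hT.strictMono_one.injective (by simp only at h; omega)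

lemma secondRowSet_subset (hT : IsTwoRowSSYT m a T) : secondRowSet T ⊆ range (2 * m - a) := by
  intro x hx
  obtain ⟨j, -, rfl⟩ := mem_image.1 hx
  have := hT.two_le_one j
  have := hT.le 1 j
  exact mem_range.2 (by omega)

lemma one_eq (hT : IsTwoRowSSYT m a T) (hA : #(secondRowSet T) = m) (j : Fin m) :
    T 1 j = (secondRowSet T).orderEmbOfFin hA j + 2 := by
  have hunique := orderEmbOfFin_unique hA (f := fun j => T 1 j - 2)
    (fun j => mem_image_of_mem _ (mem_univ j)) fun j j' hjj' => by
      have := hT.strictMono_one hjj'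
      have := hT.two_le_one j
      simp only
      omega
  have := congrFun hunique j
  have := hT.two_le_one j
  omega

lemma zero_eq (hT : IsTwoRowSSYT m a T)
    (hB : #(range (2 * m - a) \ secondRowSet T) = m - a) {j : Fin m} (hj : a ≤ (j : ℕ)) :
    T 0 j = (range (2 * m - a) \ secondRowSet T).orderEmbOfFin hB ⟨j - a, by omega⟩ + 2 := by
  set shift : Fin (m - a) → Fin m := fun i => ⟨i + a, by omega⟩ with hshift
  have htail : ∀ i, 2 ≤ T 0 (shift i) := fun i => hT.two_le_zero (by simp [hshift])
  have hmem : ∀ i, T 0 (shift i) - 2 ∈ range (2 * m - a) \ secondRowSet T := by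
    intro i
    have := htail i
    have := hT.le 0 (shift i)
    refine mem_sdiff.2 ⟨mem_range.2 (by omega), fun hmem => ?_⟩
    obtain ⟨j', -, hj'⟩ := mem_image.1 hmem
    have := hT.two_le_one j'
    have := hT.eq_of_apply_eq (c := (1, j')) (c' := (0, shift i)) (hT.two_le_one j')
      (by simp only; omega)
    simp at this
  have hmono : StrictMono fun i => T 0 (shift i) - 2 := by
    intro i i' hii'
    have hle := hT.1 0 (show shift i ≤ shift i' from Fin.mk_le_mk.2 (by omega))
    have hne := mt (hT.eq_of_apply_eq (c := (0, shift i)) (c' := (0, shift i')) (htail i))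
      (by simp [hshift, Fin.ext_iff]; omega)
    have := htail i
    simp only at hle hne ⊢
    omega
  have hj' : shift ⟨j - a, by omega⟩ = j := Fin.ext (by simp [hshift]; omega)
  have heq := congrFun (orderEmbOfFin_unique hB hmem hmono) ⟨j - a, by omega⟩
  have h2 := htail ⟨j - a, by omega⟩
  simp only [hj'] at heq h2
  omega

theorem eq_tableauOf (hT : IsTwoRowSSYT m a T) (hA : #(secondRowSet T) = m)
    (hB : #(range (2 * m - a) \ secondRowSet T) = m - a) :
    T = tableauOf a (secondRowSet T) (range (2 * m - a) \ secondRowSet T) hA hB := by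
  funext i j
  revert i
  refine Fin.forall_fin_two.2 ⟨?_, by rw [tableauOf_one, hT.one_eq hA]⟩
  by_cases hj : a ≤ (j : ℕ)
  · rw [tableauOf_zero_of_le hA hB hj, hT.zero_eq hB hj]
  · rw [tableauOf_zero_of_lt hA hB (not_le.1 hj), hT.zero_eq_one_iff]
    exact not_le.1 hj

theorem secondRowSet_mem_ballotSet (hT : IsTwoRowSSYT m a T) (ham : a ≤ m) :
    secondRowSet T ∈ ballotSet (2 * m - a) m a := by
  have hAN := hT.secondRowSet_subset
  have hA := hT.card_secondRowSet
  have hB := card_range_sdiff hAN hA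
  refine mem_ballotSet.2 ⟨hAN, hA, ?_⟩
  rw [← isTwoRowSSYT_tableauOf_iff hA hB ham hAN rfl, ← hT.eq_tableauOf hA hB]
  exact hT

end IsTwoRowSSYT

def twoRowSSYTEquivBallotSet {m a : ℕ} (ham : a ≤ m) :
    {T // IsTwoRowSSYT m a T} ≃ ballotSet (2 * m - a) m a where
  toFun T := ⟨secondRowSet T.1, T.2.secondRowSet_mem_ballotSet ham⟩
  invFun A :=
    have hA := mem_ballotSet.1 A.2
    ⟨tableauOf a A.1 _ hA.2.1 (card_range_sdiff hA.1 hA.2.1),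
      (isTwoRowSSYT_tableauOf_iff _ _ ham hA.1 rfl).2 hA.2.2⟩
  left_inv T := Subtype.ext (T.2.eq_tableauOf _ _).symm
  right_inv A := by
    obtain ⟨hAN, hA, -⟩ := mem_ballotSet.1 A.2
    exact Subtype.ext (secondRowSet_tableauOf hA (card_range_sdiff hAN hA))

theorem card_twoRowSSYT {m a : ℕ} (ham : a ≤ m) :
    Nat.card {T // IsTwoRowSSYT m a T} = #(ballotSet (2 * m - a) m a) := by
  rw [Nat.card_congr (twoRowSSYTEquivBallotSet ham), Nat.card_eq_fintype_card, Fintype.card_coe]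

/-- For `1 ≤ a ≤ d - 1`, the number of semistandard Young tableaux of shape
`2 × (d-1)` with content `(a, 1, 1, …, 1)` (the entry `1` appears `a` times, each entry
`k` with `2 ≤ k ≤ 2d-1-a` appears exactly once) equals `((a+1)/d) * choose (2d-2-a) (d-1)`. -/
theorem card_ssyt_content_a_ones (d a : ℕ) (ha : 1 ≤ a) (had : a ≤ d - 1) :
    d * Nat.card {T : Fin 2 → Fin (d - 1) → ℕ //
      (∀ i, Monotone (T i)) ∧
      (∀ j, T 0 j < T 1 j) ∧
      entryCount T 1 = a ∧
      (∀ k, 2 ≤ k → k ≤ 2 * d - 1 - a → entryCount T k = 1) ∧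
      (∀ i j, 1 ≤ T i j ∧ T i j ≤ 2 * d - 1 - a)}
    = (a + 1) * Nat.choose (2 * d - 2 - a) (d - 1) := by
  obtain ⟨m, rfl⟩ : ∃ m, d = m + 1 := ⟨d - 1, by omega⟩
  rw [Nat.add_sub_cancel] at had ⊢
  rw [show 2 * (m + 1) - 1 - a = 2 * m + 1 - a by omega,
    show 2 * (m + 1) - 2 - a = 2 * m - a by omega]
  exact (congrArg _ (card_twoRowSSYT had)).trans (succ_mul_card_ballotSet had)
end

section
/- Let A_1, ..., A_q be pairwise disjoint finite subsets of the real line such that max A_i < min A_j whenever i < j, with |A_j| = a_j + 1 and sum of a_j equal to 2d-2. Then the number of perfect matchings of the multiset of 'slots' — where interval j contributes a_j slots — realized as non-crossing chord diagrams on 2d-2 linearly ordered points (a_j consecutive points for each j) with no chord joining two points of the same group j, equals the Kostka number K_{(a_1,...,a_q)} of shape 2×(d-1). -/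
/-- A fixed-point-free involution `f` of `Fin N` (a perfect matching, pairing `i` with `f i`)
is *non-crossing* if there are no two pairs `{a, f a}`, `{c, f c}` with `a < c < f a < f c`. -/
def NoncrossingMatching {N : ℕ} (f : Fin N → Fin N) : Prop :=
  Function.Involutive f ∧ (∀ i, f i ≠ i) ∧
    ¬∃ a c : Fin N, a < c ∧ c < f a ∧ f a < f c

/-!
A noncrossing perfect matching is determined by its word of left endpoints (`true`) and right
endpoints (`false`): the words that occur are exactly the Dyck words, each left endpoint being
matched to the first later point at which the height returns to its level. Forbidding chords
inside a group of consecutive points forces each group to read as a block of right endpoints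
followed by a block of left endpoints, so the word is determined by the number `o j` of left
endpoints in each group. The Dyck condition then becomes the ballot inequalities
`∑_{i ≤ j} (a i - o i) ≤ ∑_{i < j} o i`, which say exactly that the two-row tableau whose first row
contains `o j` entries `j + 1` and whose second row contains `a j - o j` of them is column-strict.
-/

open Finset

namespace GroupedNoncrossing

lemma mem_iff_lt_card_of_isLowerSet {n : ℕ} {S : Finset (Fin n)}
    (hS : IsLowerSet (S : Set (Fin n))) (x : Fin n) : x ∈ S ↔ (x : ℕ) < #S := by
  constructor
  · intro hx
    have := card_le_card fun y hy => hS (mem_Iic.1 hy) hx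
    rw [Fin.card_Iic] at this
    omega
  · intro hx
    by_contra hx'
    have := card_le_card fun y (hy : y ∈ S) => mem_Iio.2 (lt_of_not_ge fun hxy => hx' (hS hxy hy))
    rw [Fin.card_Iio] at this
    omega

lemma card_filter_le_lt {n x y : ℕ} (hy : y ≤ n) : #{i : Fin n | x ≤ ↑i ∧ ↑i < y} = y - x := by
  have : ({i : Fin n | x ≤ ↑i ∧ ↑i < y} : Finset _).map Fin.valEmbedding = Ico x y := by
    ext k
    simp only [mem_map, mem_filter, mem_univ, true_and, Fin.valEmbedding_apply, mem_Ico]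
    exact ⟨fun ⟨i, h, hi⟩ => hi ▸ h, fun h => ⟨⟨k, by omega⟩, h, rfl⟩⟩
  rw [← card_map, this, Nat.card_Ico]

section Height

variable {N : ℕ} (w : Fin N → Bool)

def countIn (b : Bool) (a c : ℕ) : ℕ := #{i : Fin N | a ≤ ↑i ∧ ↑i < c ∧ w i = b}

def height (k : ℕ) : ℤ := countIn w true 0 k - countIn w false 0 k

lemma countIn_add {a b c : ℕ} (hab : a ≤ b) (hbc : b ≤ c) (x : Bool) :
    countIn w x a b + countIn w x b c = countIn w x a c := by
  unfold countIn
  rw [← card_union_of_disjoint (disjoint_filter.2 fun i _ h1 h2 => by omega)]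
  congr 1
  ext i
  simp only [mem_union, mem_filter, mem_univ, true_and]
  grind

lemma height_sub {a c : ℕ} (hac : a ≤ c) :
    height w c - height w a = countIn w true a c - countIn w false a c := by
  unfold height
  rw [← countIn_add w (Nat.zero_le a) hac, ← countIn_add w (Nat.zero_le a) hac]
  push_cast
  ring

@[simp]
lemma height_zero : height w 0 = 0 := by simp [height, countIn]

lemma height_succ (i : Fin N) : height w (i + 1) = height w i + if w i then 1 else -1 := by
  have key : ∀ b, countIn w b i (i + 1) = if w i = b then 1 else 0 := by
    intro b
    have : ({j : Fin N | (i : ℕ) ≤ j ∧ (j : ℕ) < i + 1 ∧ w j = b} : Finset _)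
        = ({i} : Finset (Fin N)).filter (w · = b) := by
      ext j
      simp only [mem_filter, mem_univ, true_and, mem_singleton]
      grind
    rw [countIn, this, filter_singleton]
    split_ifs <;> simp
  have := height_sub w (Nat.le_succ i)
  rw [key, key] at this
  cases hw : w i <;> simp [hw] at this ⊢ <;> linarith

lemma height_of_le {k : ℕ} (hk : N ≤ k) : height w k = height w N := by
  have h : ∀ b, countIn w b N k = 0 := fun b =>
    card_eq_zero.2 (filter_eq_empty_iff.2 fun i _ h => by have := i.isLt; omega)
  have := height_sub w hk
  rw [h, h] at this
  simpa [sub_eq_zero] using this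

lemma height_succ_le (k : ℕ) : height w (k + 1) ≤ height w k + 1 := by
  rcases lt_or_ge k N with hk | hk
  · have := height_succ w ⟨k, hk⟩
    split_ifs at this <;> simp only at this <;> linarith
  · rw [height_of_le w hk, height_of_le w (k := k + 1) (by omega)]
    linarith

lemma height_sub_one_le (k : ℕ) : height w k - 1 ≤ height w (k + 1) := by
  rcases lt_or_ge k N with hk | hk
  · have := height_succ w ⟨k, hk⟩
    split_ifs at this <;> simp only at this <;> linarith
  · rw [height_of_le w hk, height_of_le w (k := k + 1) (by omega)]
    linarith

def IsDyck : Prop := (∀ k, 0 ≤ height w k) ∧ height w N = 0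

def toWord (f : Fin N → Fin N) (i : Fin N) : Bool := decide (i < f i)

end Height

section Partner

variable {N : ℕ} (w : Fin N → Bool)

/-- `c` is the first position after `o` past which the height is back down to its value before
`o`; for a Dyck word these are the chords of the associated matching. -/
def Closes (o c : Fin N) : Prop :=
  o < c ∧ height w (c + 1) ≤ height w o ∧ ∀ k : ℕ, ↑o < k → k ≤ c → height w o < height w k

open Classical in
noncomputable def partner (i : Fin N) : Fin N :=
  if h : ∃ j, Closes w i j ∨ Closes w j i then h.choose else i

variable {w}

lemma Closes.left_eq_true {o c : Fin N} (h : Closes w o c) : w o = true := by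
  have := h.2.2 (o + 1) (by omega) h.1
  rw [height_succ] at this
  cases hw : w o <;> simp_all

lemma Closes.right_eq_false {o c : Fin N} (h : Closes w o c) : w c = false := by
  have h1 := h.2.2 c h.1 le_rfl
  have h2 := h.2.1
  rw [height_succ] at h2
  cases hw : w c
  · rfl
  · simp only [hw, if_true] at h2
    linarith

lemma Closes.right_unique {o c c' : Fin N} (h : Closes w o c) (h' : Closes w o c') : c = c' := by
  by_contra hne
  wlog hlt : c < c' generalizing c c'
  · exact this h' h (Ne.symm hne) (lt_of_le_of_ne (not_lt.1 hlt) (Ne.symm hne))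
  have := h'.2.2 (c + 1) (by have := h.1; omega) hlt
  linarith [h.2.1]

lemma Closes.left_unique {o o' c : Fin N} (h : Closes w o c) (h' : Closes w o' c) : o = o' := by
  by_contra hne
  wlog hlt : o < o' generalizing o o'
  · exact this h' h (Ne.symm hne) (lt_of_le_of_ne (not_lt.1 hlt) (Ne.symm hne))
  have := h'.2.2 c h'.1 le_rfl
  linarith [h.2.1, h.2.2 o' hlt h'.1.le, height_sub_one_le w c]

lemma Closes.partner_left {o c : Fin N} (h : Closes w o c) : partner w o = c := by
  have hex : ∃ j, Closes w o j ∨ Closes w j o := ⟨c, Or.inl h⟩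
  rw [partner, dif_pos hex]
  rcases hex.choose_spec with h' | h'
  · exact (h.right_unique h').symm
  · simpa [h.left_eq_true] using h'.right_eq_false

lemma Closes.partner_right {o c : Fin N} (h : Closes w o c) : partner w c = o := by
  have hex : ∃ j, Closes w c j ∨ Closes w j c := ⟨o, Or.inr h⟩
  rw [partner, dif_pos hex]
  rcases hex.choose_spec with h' | h'
  · simpa [h.right_eq_false] using h'.left_eq_true
  · exact (h.left_unique h').symm

lemma exists_closes_of_eq_true (hw : IsDyck w) {o : Fin N} (ho : w o = true) :
    ∃ c, Closes w o c := by
  have hstep : height w (o + 1) = height w o + 1 := by simp [height_succ, ho]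
  have hex : ∃ k, ↑o < k ∧ k < N ∧ height w (k + 1) ≤ height w o := by
    have hoN : (o : ℕ) + 1 < N := by
      by_contra h
      have := height_of_le w (show N ≤ o + 1 by omega)
      linarith [hw.1 o, hw.2]
    refine ⟨N - 1, by omega, by omega, ?_⟩
    rw [Nat.sub_add_cancel (by omega), hw.2]
    exact hw.1 o
  classical
  obtain ⟨hoc, hcN, hdrop⟩ := Nat.find_spec hex
  refine ⟨⟨Nat.find hex, hcN⟩, hoc, hdrop, fun k hok hkc => ?_⟩
  by_contra hk
  obtain rfl | hk1 : k = o + 1 ∨ (o : ℕ) + 1 < k := by omega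
  · linarith
  · exact Nat.find_min hex (show k - 1 < Nat.find hex by simp only at hkc; omega)
      ⟨by omega, by omega, by rw [Nat.sub_add_cancel (by omega)]; linarith⟩

lemma exists_closes_of_eq_false (hw : ∀ k, 0 ≤ height w k) {c : Fin N} (hc : w c = false) :
    ∃ o, Closes w o c := by
  have hstep : height w (c + 1) = height w c - 1 := by simp [height_succ, hc, sub_eq_add_neg]
  classical
  set n := Nat.findGreatest (fun k => height w k < height w c) c
  have hn : height w n < height w c :=
    Nat.findGreatest_spec (P := fun k => height w k < height w c) (Nat.zero_le _)
      (by simp only [height_zero]; linarith [hw (c + 1)])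
  have hgreat : ∀ k, n < k → k ≤ c → height w c ≤ height w k := fun k h1 h2 =>
    not_lt.1 (Nat.findGreatest_is_greatest h1 h2)
  have hnc : n < c := lt_of_le_of_ne (Nat.findGreatest_le _) fun h => by simp [← h] at hn
  refine ⟨⟨n, hnc.trans c.isLt⟩, hnc, ?_, fun k h1 h2 => lt_of_lt_of_le hn (hgreat k h1 h2)⟩
  linarith [height_succ_le w n, hgreat (n + 1) (by omega) (by omega)]

lemma closes_partner_of_eq_true (hw : IsDyck w) {i : Fin N} (hi : w i = true) :
    Closes w i (partner w i) := by
  obtain ⟨c, hc⟩ := exists_closes_of_eq_true hw hi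
  rwa [hc.partner_left]

lemma closes_partner_of_eq_false (hw : ∀ k, 0 ≤ height w k) {i : Fin N} (hi : w i = false) :
    Closes w (partner w i) i := by
  obtain ⟨o, ho⟩ := exists_closes_of_eq_false hw hi
  rwa [ho.partner_right]

lemma noncrossingMatching_partner (hw : IsDyck w) : NoncrossingMatching (partner w) := by
  refine ⟨fun i => ?_, fun i => ?_, ?_⟩
  · cases hi : w i
    · exact (closes_partner_of_eq_false hw.1 hi).partner_left
    · exact (closes_partner_of_eq_true hw hi).partner_right
  · cases hi : w i
    · exact ne_of_lt (closes_partner_of_eq_false hw.1 hi).1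
    · exact ne_of_gt (closes_partner_of_eq_true hw hi).1
  · rintro ⟨a, c, hac, hca, hac'⟩
    have closes_of_lt : ∀ i, i < partner w i → Closes w i (partner w i) := fun i hi => by
      cases h : w i
      · exact absurd hi (not_lt.2 (closes_partner_of_eq_false hw.1 h).1.le)
      · exact closes_partner_of_eq_true hw h
    have ha := closes_of_lt a (hac.trans hca)
    have hc := closes_of_lt c (hca.trans hac')
    linarith [ha.2.1, ha.2.2 c hac hca.le, hc.2.2 (partner w a + 1) (by omega) hac']

lemma toWord_partner (hw : IsDyck w) : toWord (partner w) = w := by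
  funext i
  cases hi : w i
  · simpa [toWord] using (closes_partner_of_eq_false hw.1 hi).1.le
  · simpa [toWord] using (closes_partner_of_eq_true hw hi).1

end Partner

section Matching

variable {N : ℕ} {f : Fin N → Fin N}

lemma toWord_eq_false_iff (hf : NoncrossingMatching f) {i : Fin N} :
    toWord f i = false ↔ f i < i := by
  simp only [toWord, decide_eq_false_iff_not, not_lt]
  exact ⟨fun h => lt_of_le_of_ne h (hf.2.1 i), le_of_lt⟩

lemma mapsTo_Ioo (hf : NoncrossingMatching f) (o : Fin N) :
    Set.MapsTo f (Set.Ioo o (f o)) (Set.Ioo o (f o)) := by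
  rintro x ⟨hox, hx⟩
  have hfo : f x ≠ o := fun h => (ne_of_lt hx) (by rw [← h, hf.1])
  have hfx : f x ≠ f o := fun h => (ne_of_gt hox) (hf.1.injective h)
  refine ⟨lt_of_le_of_ne (not_lt.1 fun h => hf.2.2 ⟨f x, o, h, by rwa [hf.1], by rwa [hf.1]⟩)
    hfo.symm, lt_of_le_of_ne (not_lt.1 fun h => hf.2.2 ⟨o, x, hox, hx, h⟩) hfx⟩

lemma countIn_false_le_countIn_true (hf : NoncrossingMatching f) {a c : ℕ}
    (h : ∀ x : Fin N, a ≤ x → x < c → f x < x → a ≤ f x) :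
    countIn (toWord f) false a c ≤ countIn (toWord f) true a c := by
  refine card_le_card_of_injOn f (fun x hx => ?_) hf.1.injective.injOn
  simp only [coe_filter, mem_univ, true_and, Set.mem_ofPred_eq] at hx ⊢
  obtain ⟨hax, hxc, hx⟩ := hx
  rw [toWord_eq_false_iff hf] at hx
  refine ⟨h x hax hxc hx, by omega, ?_⟩
  simpa [toWord, hf.1 x] using hx

lemma countIn_true_le_countIn_false (hf : NoncrossingMatching f) {a c : ℕ}
    (h : ∀ x : Fin N, a ≤ x → x < c → x < f x → f x < c) :
    countIn (toWord f) true a c ≤ countIn (toWord f) false a c := by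
  refine card_le_card_of_injOn f (fun x hx => ?_) hf.1.injective.injOn
  simp only [coe_filter, mem_univ, true_and, Set.mem_ofPred_eq] at hx ⊢
  obtain ⟨hax, hxc, hx⟩ := hx
  simp only [toWord, decide_eq_true_eq] at hx
  refine ⟨by omega, h x hax hxc hx, ?_⟩
  rwa [toWord_eq_false_iff hf, hf.1 x]

lemma isDyck_toWord (hf : NoncrossingMatching f) : IsDyck (toWord f) := by
  refine ⟨fun k => ?_, ?_⟩
  · have := height_sub (toWord f) (Nat.zero_le k)
    have := countIn_false_le_countIn_true hf (a := 0) (c := k) fun x _ _ _ => Nat.zero_le _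
    simp only [height_zero] at *
    omega
  · have := height_sub (toWord f) (Nat.zero_le N)
    have := countIn_false_le_countIn_true hf (a := 0) (c := N) fun x _ _ _ => Nat.zero_le _
    have := countIn_true_le_countIn_false hf (a := 0) (c := N) fun x _ _ _ => (f x).isLt
    simp only [height_zero] at *
    omega

lemma closes_toWord (hf : NoncrossingMatching f) {o : Fin N} (ho : o < f o) :
    Closes (toWord f) o (f o) := by
  have hstep : height (toWord f) (o + 1) = height (toWord f) o + 1 := by
    simp [height_succ, toWord, ho]
  refine ⟨ho, ?_, fun k hok hkc => ?_⟩
  · have := height_sub (toWord f) (show (o : ℕ) ≤ f o + 1 by omega)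
    have := countIn_true_le_countIn_false hf (a := o) (c := f o + 1) fun x hox hxc hx => by
      rcases (Fin.le_def.2 hox).lt_or_eq with hox | rfl
      · rcases (Nat.lt_succ_iff.1 hxc).lt_or_eq with hxc | hxc
        · exact Nat.lt_succ_of_lt (mapsTo_Ioo hf o ⟨hox, hxc⟩).2
        · rw [Fin.ext hxc, hf.1] at hx
          exact absurd ho (not_lt.2 hx.le)
      · exact Nat.lt_succ_self _
    omega
  · have := height_sub (toWord f) (show (o : ℕ) + 1 ≤ k by omega)
    have := countIn_false_le_countIn_true hf (a := o + 1) (c := k) fun x hox hxc _ =>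
      (mapsTo_Ioo hf o ⟨show o < x by omega, show x < f o by omega⟩).1
    omega

lemma partner_toWord (hf : NoncrossingMatching f) : partner (toWord f) = f := by
  funext i
  rcases lt_or_gt_of_ne (hf.2.1 i).symm with hi | hi
  · exact (closes_toWord hf hi).partner_left
  · have := closes_toWord hf (o := f i) (by rwa [hf.1])
    rw [hf.1] at this
    exact this.partner_right

end Matching


section Groups

variable {N q : ℕ} (g : Fin N → Fin q)

def ClosersBeforeOpeners (w : Fin N → Bool) : Prop :=
  ∀ i j, i ≤ j → g i = g j → w i = true → w j = true

variable {g}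

lemma closersBeforeOpeners_toWord (hg : Monotone g) {f : Fin N → Fin N}
    (hf : NoncrossingMatching f) (hfg : ∀ i, g (f i) ≠ g i) :
    ClosersBeforeOpeners g (toWord f) := by
  intro i j hij hgij hi
  simp only [toWord, decide_eq_true_eq] at hi ⊢
  by_contra hj
  have hj : f j < j := lt_of_le_of_ne (not_lt.1 hj) (hf.2.1 j)
  have hij : i < j := lt_of_le_of_ne hij fun h => by subst h; exact lt_asymm hi hj
  have hfi : j < f i := not_le.1 fun h =>
    hfg i (le_antisymm ((hg h).trans hgij.symm.le) (hg hi.le))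
  have hfj : f j < i := not_le.1 fun h =>
    hfg j (le_antisymm (hg hj.le) (hgij.symm.le.trans (hg h)))
  exact hf.2.2 ⟨f j, i, hfj, by rwa [hf.1], by rwa [hf.1]⟩

lemma apply_partner_ne {w : Fin N → Bool} (hw : IsDyck w) (hgw : ClosersBeforeOpeners g w)
    (i : Fin N) : g (partner w i) ≠ g i := by
  intro h
  cases hi : w i
  · have hc := closes_partner_of_eq_false hw.1 hi
    simpa [hi] using hgw _ _ hc.1.le h hc.left_eq_true
  · have hc := closes_partner_of_eq_true hw hi
    simpa [hc.right_eq_false] using hgw _ _ hc.1.le h.symm hi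

variable (g) in
noncomputable def matchingEquivWord (hg : Monotone g) :
    {f : Fin N → Fin N // NoncrossingMatching f ∧ ∀ i, g (f i) ≠ g i} ≃
      {w : Fin N → Bool // IsDyck w ∧ ClosersBeforeOpeners g w} where
  toFun f := ⟨toWord f.1, isDyck_toWord f.2.1, closersBeforeOpeners_toWord hg f.2.1 f.2.2⟩
  invFun w := ⟨partner w.1, noncrossingMatching_partner w.2.1, apply_partner_ne w.2.1 w.2.2⟩
  left_inv f := Subtype.ext (partner_toWord f.2.1)
  right_inv w := Subtype.ext (toWord_partner w.2.1)

end Groups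


section Counts

variable {N q : ℕ} {g : Fin N → Fin q}

def prefixSum (v : Fin q → ℕ) (t : ℕ) : ℕ := ∑ i ∈ {i : Fin q | (i : ℕ) < t}, v i

lemma prefixSum_succ (v : Fin q → ℕ) (j : Fin q) : prefixSum v (j + 1) = prefixSum v j + v j := by
  have : ({i : Fin q | (i : ℕ) < j + 1} : Finset (Fin q))
      = insert j ({i : Fin q | (i : ℕ) < j} : Finset (Fin q)) := by
    ext i
    simp only [mem_filter, mem_univ, true_and, mem_insert, Fin.ext_iff]
    omega
  rw [prefixSum, prefixSum, this, sum_insert (by simp), add_comm]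

lemma card_filter_lt_eq_prefixSum (p : Fin N → Prop) [DecidablePred p] (t : ℕ) :
    #{x | (g x : ℕ) < t ∧ p x} = prefixSum (fun j => #{x | g x = j ∧ p x}) t := by
  rw [card_eq_sum_card_fiberwise (f := g) (t := {j : Fin q | (j : ℕ) < t})
    fun x hx => by simp_all]
  refine sum_congr rfl fun j hj => ?_
  simp only [mem_filter, mem_univ, true_and] at hj
  congr 1
  ext x
  simp only [mem_filter, mem_univ, true_and]
  constructor
  · rintro ⟨⟨-, hx⟩, rfl⟩
    exact ⟨rfl, hx⟩
  · rintro ⟨rfl, hx⟩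
    exact ⟨⟨hj, hx⟩, rfl⟩

lemma mem_fiber_iff (hg : Monotone g) (i : Fin N) (j : Fin q) :
    g i = j ↔ #{y | g y < j} ≤ i ∧ (i : ℕ) < #{y | g y ≤ j} := by
  rw [← not_lt, ← mem_iff_lt_card_of_isLowerSet, ← mem_iff_lt_card_of_isLowerSet]
  · simp only [mem_filter, mem_univ, true_and, not_lt]
    exact le_antisymm_iff.trans and_comm
  · intro x y hxy hy
    simp only [coe_filter, mem_univ, true_and, Set.mem_ofPred_eq] at hy ⊢
    exact (hg hxy).trans hy
  · intro x y hxy hy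
    simp only [coe_filter, mem_univ, true_and, Set.mem_ofPred_eq] at hy ⊢
    exact (hg hxy).trans_lt hy

lemma card_fiber (hg : Monotone g) (j : Fin q) :
    #{i | g i = j} = #{y | g y ≤ j} - #{y | g y < j} := by
  rw [← card_filter_le_lt (card_le_univ _ |>.trans_eq (card_fin N))]
  congr 1
  ext i
  simp only [mem_filter, mem_univ, true_and, mem_fiber_iff hg]

lemma height_eq_card_sub_card (w : Fin N → Bool) :
    height w N = #{i | w i = true} - #{i | w i = false} := by
  simp [height, countIn]

lemma card_true_add_card_false (w : Fin N → Bool) :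
    #{i | w i = true} + #{i | w i = false} = N := by
  rw [← card_union_of_disjoint (disjoint_filter.2 fun i _ h1 h2 => by simp_all)]
  convert card_fin N
  ext i
  cases w i <;> simp

lemma countIn_card_of_isLowerSet (w : Fin N → Bool) {K : Finset (Fin N)}
    (hK : IsLowerSet (K : Set (Fin N))) (b : Bool) : countIn w b 0 #K = #{i | i ∈ K ∧ w i = b} := by
  simp [countIn, mem_iff_lt_card_of_isLowerSet hK]

lemma height_nonneg_of_ballot (hg : Monotone g) {w : Fin N → Bool}
    (hw : ∀ j : Fin q, #{x | (g x : ℕ) < j + 1 ∧ w x = false} ≤ #{x | (g x : ℕ) < j ∧ w x = true})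
    (k : ℕ) : 0 ≤ height w k := by
  wlog hk : k ≤ N generalizing k
  · rw [height_of_le w (not_le.1 hk).le]
    exact this N le_rfl
  rcases Nat.eq_zero_or_pos k with rfl | hk0
  · simp
  set j := g ⟨k - 1, by omega⟩
  have hfalse : countIn w false 0 k ≤ #{x | (g x : ℕ) < j + 1 ∧ w x = false} :=
    card_le_card fun x hx => by
      simp only [mem_filter, mem_univ, true_and] at hx ⊢
      exact ⟨Nat.lt_succ_of_le (hg (Fin.mk_le_mk.2 (by omega) : x ≤ ⟨k - 1, by omega⟩)), hx.2.2⟩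
  have htrue : #{x | (g x : ℕ) < j ∧ w x = true} ≤ countIn w true 0 k :=
    card_le_card fun x hx => by
      simp only [mem_filter, mem_univ, true_and] at hx ⊢
      refine ⟨Nat.zero_le _, ?_, hx.2⟩
      by_contra h
      exact absurd (hg (Fin.mk_le_mk.2 (by omega) : ⟨k - 1, by omega⟩ ≤ x)) (not_le.2 hx.1)
  have := hw j
  simp only [height]
  omega

lemma ballot_of_height_nonneg (hg : Monotone g) {w : Fin N → Bool}
    (hgw : ClosersBeforeOpeners g w) (hw : ∀ k, 0 ≤ height w k) (j : Fin q) :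
    #{x | (g x : ℕ) < j + 1 ∧ w x = false} ≤ #{x | (g x : ℕ) < j ∧ w x = true} := by
  -- the height is lowest just after the closers of group `j`, i.e. after the initial segment `K`
  set K : Finset (Fin N) := {x | g x < j ∨ (g x = j ∧ w x = false)}
  have hK : IsLowerSet (K : Set (Fin N)) := by
    intro x y hyx hx
    simp only [K, coe_filter, mem_univ, true_and, Set.mem_ofPred_eq] at hx ⊢
    rcases (hg hyx).lt_or_eq with hy | hy
    · exact Or.inl (hy.trans_le (hx.elim le_of_lt fun h => h.1.le))
    · rcases hx with hx | ⟨hx, hwx⟩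
      · exact Or.inl (hy ▸ hx)
      · refine Or.inr ⟨hy.trans hx, ?_⟩
        cases hwy : w y
        · rfl
        · simpa [hwx] using hgw y x hyx hy hwy
  have h := hw #K
  simp only [height, countIn_card_of_isLowerSet w hK] at h
  have htrue : #{i | i ∈ K ∧ w i = true} = #{x | (g x : ℕ) < j ∧ w x = true} := by
    congr 1; ext x
    simp only [K, mem_filter, mem_univ, true_and, Fin.lt_def, Fin.ext_iff]
    cases w x <;> simp
  have hfalse : #{i | i ∈ K ∧ w i = false} = #{x | (g x : ℕ) < j + 1 ∧ w x = false} := by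
    congr 1; ext x
    simp only [K, mem_filter, mem_univ, true_and, Fin.lt_def, Fin.ext_iff, Nat.lt_succ_iff_lt_or_eq]
    tauto
  omega

end Counts


section WordOfCounts

variable {N q : ℕ} {g : Fin N → Fin q}

variable (g) in
def openCount (w : Fin N → Bool) (j : Fin q) : ℕ := #{i | g i = j ∧ w i = true}

variable (g) in
/-- `i` is an opener iff it is among the last `o (g i)` points of its group. -/
def wordOfCounts (o : Fin q → ℕ) (i : Fin N) : Bool := decide (#{y | g y ≤ g i} ≤ ↑i + o (g i))

def BallotCounts (m : ℕ) (a o : Fin q → ℕ) : Prop :=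
  (∀ j, o j ≤ a j) ∧ ∑ j, o j = m ∧ ∀ j : Fin q, prefixSum (a - o) (j + 1) ≤ prefixSum o j

lemma sum_openCount (w : Fin N → Bool) : ∑ j, openCount g w j = #{i | w i = true} := by
  rw [card_eq_sum_card_fiberwise (f := g) (t := univ) fun _ _ => mem_coe.2 (mem_univ _)]
  refine sum_congr rfl fun j _ => ?_
  unfold openCount
  congr 1
  ext i
  simp only [mem_filter, mem_univ, true_and]
  exact and_comm

lemma card_fiber_false (w : Fin N → Bool) (j : Fin q) :
    #{i | g i = j ∧ w i = false} = #{i | g i = j} - openCount g w j := by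
  have : openCount g w j + #{i | g i = j ∧ w i = false} = #{i | g i = j} := by
    rw [openCount, ← card_union_of_disjoint (disjoint_filter.2 fun i _ h1 h2 => by simp_all)]
    congr 1
    ext i
    cases hw : w i <;> simp [hw]
  omega

lemma openCount_wordOfCounts (hg : Monotone g) {o : Fin q → ℕ} {j : Fin q}
    (ho : o j ≤ #{i | g i = j}) : openCount g (wordOfCounts g o) j = o j := by
  have hfib := card_fiber hg j
  have : ({i | g i = j ∧ wordOfCounts g o i = true} : Finset (Fin N))
      = ({i : Fin N | #{y | g y ≤ j} - o j ≤ (i : ℕ) ∧ (i : ℕ) < #{y | g y ≤ j}} :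
        Finset (Fin N)) := by
    ext i
    simp only [mem_filter, mem_univ, true_and, wordOfCounts, decide_eq_true_eq]
    constructor
    · rintro ⟨rfl, h⟩
      exact ⟨by omega, ((mem_fiber_iff hg i _).1 rfl).2⟩
    · rintro ⟨h1, h2⟩
      obtain rfl : g i = j := (mem_fiber_iff hg i j).2 ⟨by omega, h2⟩
      exact ⟨rfl, by omega⟩
  rw [openCount, this, card_filter_le_lt ((card_le_univ _).trans_eq (card_fin N))]
  omega

lemma wordOfCounts_openCount (hg : Monotone g) {w : Fin N → Bool}
    (hw : ClosersBeforeOpeners g w) : wordOfCounts g (openCount g w) = w := by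
  funext i
  have hi := (mem_fiber_iff hg i (g i)).1 rfl
  have hN : #{y | g y ≤ g i} ≤ N := (card_le_univ _).trans_eq (card_fin N)
  cases hwi : w i
  · have : openCount g w (g i) ≤ #{y | g y ≤ g i} - (i + 1) := by
      rw [← card_filter_le_lt hN]
      refine card_le_card fun y hy => ?_
      simp only [mem_filter, mem_univ, true_and] at hy ⊢
      refine ⟨?_, ((mem_fiber_iff hg y _).1 hy.1).2⟩
      by_contra hyi
      simpa [hwi] using hw y i (Fin.le_def.2 (by omega)) hy.1 hy.2
    simp only [wordOfCounts, decide_eq_false_iff_not]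
    omega
  · have : #{y | g y ≤ g i} - i ≤ openCount g w (g i) := by
      rw [← card_filter_le_lt hN]
      refine card_le_card fun y hy => ?_
      simp only [mem_filter, mem_univ, true_and] at hy ⊢
      have hgy : g y = g i := (mem_fiber_iff hg y _).2 ⟨by omega, hy.2⟩
      exact ⟨hgy, hw i y (Fin.le_def.2 hy.1) hgy.symm hwi⟩
    simp only [wordOfCounts, decide_eq_true_eq]
    omega

lemma closersBeforeOpeners_wordOfCounts (o : Fin q → ℕ) :
    ClosersBeforeOpeners g (wordOfCounts g o) := by
  intro i j hij hgij hi
  simp only [wordOfCounts, decide_eq_true_eq, ← hgij] at hi ⊢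
  have : (i : ℕ) ≤ j := hij
  omega

variable {a : Fin q → ℕ} {m : ℕ}

lemma ballotCounts_openCount (hg : Monotone g) (ha : ∀ j, #{i | g i = j} = a j)
    (hN : N = 2 * m) {w : Fin N → Bool} (hw : IsDyck w) (hgw : ClosersBeforeOpeners g w) :
    BallotCounts m a (openCount g w) := by
  have hclose : (fun j => #{i | g i = j ∧ w i = false}) = a - openCount g w :=
    funext fun j => by rw [Pi.sub_apply, ← ha j, card_fiber_false]
  refine ⟨fun j => ha j ▸ card_le_card fun i hi => ?_, ?_, fun j => ?_⟩
  · simp only [mem_filter, mem_univ, true_and] at hi ⊢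
    exact hi.1
  · have := hw.2
    have := height_eq_card_sub_card w
    have := card_true_add_card_false w
    rw [sum_openCount]
    omega
  · have := ballot_of_height_nonneg hg hgw hw.1 j
    rwa [card_filter_lt_eq_prefixSum, card_filter_lt_eq_prefixSum, hclose] at this

lemma isDyck_wordOfCounts (hg : Monotone g) (ha : ∀ j, #{i | g i = j} = a j)
    (hN : N = 2 * m) {o : Fin q → ℕ} (ho : BallotCounts m a o) : IsDyck (wordOfCounts g o) := by
  have hcount : openCount g (wordOfCounts g o) = o :=
    funext fun j => openCount_wordOfCounts hg ((ha j).symm ▸ ho.1 j)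
  have hclose : (fun j => #{i | g i = j ∧ wordOfCounts g o i = false}) = a - o :=
    funext fun j => by rw [Pi.sub_apply, ← ha j, card_fiber_false, hcount]
  refine ⟨height_nonneg_of_ballot hg fun j => ?_, ?_⟩
  · rw [card_filter_lt_eq_prefixSum, card_filter_lt_eq_prefixSum, hclose]
    exact (congrArg (prefixSum · j) hcount).symm ▸ ho.2.2 j
  · have h := sum_openCount (g := g) (wordOfCounts g o)
    rw [hcount, ho.2.1] at h
    have := card_true_add_card_false (wordOfCounts g o)
    rw [height_eq_card_sub_card]
    omega

variable (g) in
def wordEquivBallotCounts (hg : Monotone g) (ha : ∀ j, #{i | g i = j} = a j)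
    (hN : N = 2 * m) :
    {w : Fin N → Bool // IsDyck w ∧ ClosersBeforeOpeners g w} ≃
      {o : Fin q → ℕ // BallotCounts m a o} where
  toFun w := ⟨openCount g w.1, ballotCounts_openCount hg ha hN w.2.1 w.2.2⟩
  invFun o := ⟨wordOfCounts g o.1, isDyck_wordOfCounts hg ha hN o.2,
    closersBeforeOpeners_wordOfCounts o.1⟩
  left_inv w := Subtype.ext (wordOfCounts_openCount hg w.2.2)
  right_inv o := Subtype.ext (funext fun j => openCount_wordOfCounts hg ((ha j).symm ▸ o.2.1 j))

end WordOfCounts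


section Rows

variable {m q : ℕ}

@[simp]
lemma prefixSum_zero (v : Fin q → ℕ) : prefixSum v 0 = 0 := by simp [prefixSum]

lemma prefixSum_mono (v : Fin q → ℕ) : Monotone (prefixSum v) := fun s t hst =>
  sum_le_sum_of_subset fun i hi => by
    simp only [mem_filter, mem_univ, true_and] at hi ⊢
    omega

lemma prefixSum_of_le (v : Fin q → ℕ) {t : ℕ} (ht : q ≤ t) : prefixSum v t = ∑ j, v j := by
  rw [prefixSum, filter_true_of_mem fun i _ => i.isLt.trans_le ht]

def rowCount (q : ℕ) (u : Fin m → ℕ) (j : Fin q) : ℕ := #{c | u c = j + 1}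

/-- The weakly increasing row with `v j` entries equal to `j + 1`. -/
def rowOfCounts (v : Fin q → ℕ) (c : Fin m) : ℕ :=
  1 + #{j : Fin q | prefixSum v ((j : ℕ) + 1) ≤ c}

lemma card_le_eq_prefixSum_rowCount {u : Fin m → ℕ} (hu : ∀ c, 1 ≤ u c ∧ u c ≤ q) (t : ℕ) :
    #{c | u c ≤ t} = prefixSum (rowCount q u) t := by
  let f : Fin m → Fin q := fun c => ⟨u c - 1, by have := hu c; omega⟩
  calc #{c | u c ≤ t} = #{c | (f c : ℕ) < t ∧ True} :=
        congrArg card (filter_congr fun c _ => by have := hu c; simp only [f, and_true]; omega)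
    _ = prefixSum (fun j => #{c | f c = j ∧ True}) t := card_filter_lt_eq_prefixSum _ t
    _ = prefixSum (rowCount q u) t :=
        congrArg (prefixSum · t) <| funext fun j => congrArg card <| filter_congr fun c _ => by
          have := hu c
          simp only [f, Fin.ext_iff, and_true]
          omega

lemma rowOfCounts_rowCount {u : Fin m → ℕ} (hmono : Monotone u)
    (hu : ∀ c, 1 ≤ u c ∧ u c ≤ q) : rowOfCounts (rowCount q u) = u := by
  funext c
  have hlow : ∀ t, IsLowerSet (({c' | u c' ≤ t} : Finset (Fin m)) : Set (Fin m)) :=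
    fun t x y hxy hx => by
      simp only [coe_filter, mem_univ, true_and, Set.mem_ofPred_eq] at hx ⊢
      exact (hmono hxy).trans hx
  have : ({j : Fin q | prefixSum (rowCount q u) ((j : ℕ) + 1) ≤ c} : Finset (Fin q))
      = ({j : Fin q | 0 ≤ (j : ℕ) ∧ (j : ℕ) < u c - 1} : Finset (Fin q)) := by
    ext j
    simp only [mem_filter, mem_univ, true_and, ← card_le_eq_prefixSum_rowCount hu]
    rw [← not_lt, ← mem_iff_lt_card_of_isLowerSet (hlow _)]
    simp only [mem_filter, mem_univ, true_and]
    omega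
  have hc := hu c
  rw [rowOfCounts, this, card_filter_le_lt (by omega)]
  omega

lemma rowOfCounts_eq_iff (v : Fin q → ℕ) (c : Fin m) (j : Fin q) :
    rowOfCounts v c = j + 1 ↔ prefixSum v j ≤ c ∧ (c : ℕ) < prefixSum v (j + 1) := by
  rw [rowOfCounts]
  set D : Finset (Fin q) := {i : Fin q | prefixSum v ((i : ℕ) + 1) ≤ c}
  have hD : IsLowerSet (D : Set (Fin q)) := fun x y hxy hx => by
    simp only [D, coe_filter, mem_univ, true_and, Set.mem_ofPred_eq] at hx ⊢
    exact (prefixSum_mono v (Nat.succ_le_succ hxy)).trans hx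
  constructor
  · intro h
    have hj : j ∉ D := by
      rw [mem_iff_lt_card_of_isLowerSet hD]
      omega
    simp only [D, mem_filter, mem_univ, true_and, not_le] at hj
    refine ⟨?_, hj⟩
    rcases Nat.eq_zero_or_pos (j : ℕ) with h0 | h0
    · simp [h0]
    · have : (⟨j - 1, by omega⟩ : Fin q) ∈ D := by
        rw [mem_iff_lt_card_of_isLowerSet hD]
        dsimp only
        omega
      simpa [D, Nat.sub_add_cancel h0] using this
  · rintro ⟨h1, h2⟩
    have : D = ({i : Fin q | 0 ≤ (i : ℕ) ∧ (i : ℕ) < j} : Finset (Fin q)) := by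
      ext i
      simp only [D, mem_filter, mem_univ, true_and, zero_le]
      constructor
      · intro h
        by_contra hij
        exact absurd (h.trans' (prefixSum_mono v (by omega : (j : ℕ) + 1 ≤ i + 1))) (not_le.2 h2)
      · intro h
        exact (prefixSum_mono v (by omega : (i : ℕ) + 1 ≤ j)).trans h1
    rw [this, card_filter_le_lt j.isLt.le]
    omega

lemma rowCount_rowOfCounts {v : Fin q → ℕ} (hv : ∑ j, v j = m) :
    rowCount q (rowOfCounts (m := m) v) = v := by
  funext j
  have hle : prefixSum v (j + 1) ≤ m :=
    hv ▸ prefixSum_of_le v le_rfl ▸ prefixSum_mono v (show (j : ℕ) + 1 ≤ q by omega)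
  rw [rowCount, filter_congr fun c _ => rowOfCounts_eq_iff v c j, card_filter_le_lt hle,
    prefixSum_succ]
  omega

lemma monotone_rowOfCounts (v : Fin q → ℕ) : Monotone (rowOfCounts (m := m) v) :=
  fun c c' hcc' => Nat.add_le_add_left (card_le_card fun j hj => by
    simp only [mem_filter, mem_univ, true_and] at hj ⊢
    exact hj.trans hcc') 1

lemma rowOfCounts_mem_Icc {v : Fin q → ℕ} (hv : ∑ j, v j = m) (c : Fin m) :
    1 ≤ rowOfCounts v c ∧ rowOfCounts v c ≤ q := by
  have hc := c.isLt
  have hq : 0 < q := Nat.pos_of_ne_zero fun h => by subst h; simp at hv; omega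
  have : #{j : Fin q | prefixSum v ((j : ℕ) + 1) ≤ c} ≤ q - 1 :=
    calc _ ≤ #{j : Fin q | 0 ≤ (j : ℕ) ∧ (j : ℕ) < q - 1} := card_le_card fun j hj => by
          simp only [mem_filter, mem_univ, true_and, zero_le] at hj ⊢
          by_contra h
          rw [prefixSum_of_le v (by omega), hv] at hj
          omega
      _ = q - 1 := card_filter_le_lt (by omega)
  unfold rowOfCounts
  omega

lemma lt_of_card_le_card {u v : Fin m → ℕ} (hu : Monotone u) (hv : Monotone v)
    (h : ∀ c, #{c' | v c' ≤ v c} ≤ #{c' | u c' < v c}) (c : Fin m) : u c < v c := by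
  have hlow : IsLowerSet (({c' | u c' < v c} : Finset (Fin m)) : Set (Fin m)) :=
    fun x y hxy hx => by
      simp only [coe_filter, mem_univ, true_and, Set.mem_ofPred_eq] at hx ⊢
      exact (hu hxy).trans_lt hx
  have hc : (c : ℕ) < #{c' | v c' ≤ v c} :=
    calc (c : ℕ) < #(Iic c) := by rw [Fin.card_Iic]; omega
      _ ≤ _ := card_le_card fun x hx => by
        simp only [mem_Iic, mem_filter, mem_univ, true_and] at hx ⊢
        exact hv hx
  simpa using (mem_iff_lt_card_of_isLowerSet hlow c).2 (hc.trans_le (h c))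

end Rows


section Tableau

variable {m q : ℕ}

def IsTwoRowSSYT (a : Fin q → ℕ) (T : Fin 2 → Fin m → ℕ) : Prop :=
  (∀ i, Monotone (T i)) ∧ (∀ j, T 0 j < T 1 j) ∧
    (∀ j : Fin q, entryCount T ((j : ℕ) + 1) = a j) ∧ (∀ i j, 1 ≤ T i j ∧ T i j ≤ q)

lemma entryCount_eq_add (T : Fin 2 → Fin m → ℕ) (k : ℕ) :
    entryCount T k = #{c | T 0 c = k} + #{c | T 1 c = k} := by
  rw [entryCount, card_filter, Fintype.sum_prod_type, Fin.sum_univ_two, card_filter, card_filter]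

lemma sub_rowCount_zero {a : Fin q → ℕ} {T : Fin 2 → Fin m → ℕ} (hT : IsTwoRowSSYT a T) :
    a - rowCount q (T 0) = rowCount q (T 1) := by
  funext j
  have := hT.2.2.1 j
  rw [entryCount_eq_add] at this
  simp only [Pi.sub_apply, rowCount]
  omega

lemma ballotCounts_rowCount {a : Fin q → ℕ} {T : Fin 2 → Fin m → ℕ} (hT : IsTwoRowSSYT a T) :
    BallotCounts m a (rowCount q (T 0)) := by
  have hrow1 := sub_rowCount_zero hT
  obtain ⟨-, hstrict, hcontent, hb⟩ := hT
  refine ⟨fun j => ?_, ?_, fun j => ?_⟩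
  · rw [← hcontent j, entryCount_eq_add]
    exact Nat.le_add_right _ _
  · rw [← prefixSum_of_le _ le_rfl, ← card_le_eq_prefixSum_rowCount (hb 0),
      filter_true_of_mem fun c _ => (hb 0 c).2, card_univ, Fintype.card_fin]
  · rw [hrow1, ← card_le_eq_prefixSum_rowCount (hb 1),
      ← card_le_eq_prefixSum_rowCount (hb 0)]
    refine card_le_card fun c hc => ?_
    simp only [mem_filter, mem_univ, true_and] at hc ⊢
    have := hstrict c
    omega

lemma isTwoRowSSYT_of_ballotCounts {a o : Fin q → ℕ} (ha : ∑ j, a j = 2 * m)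
    (ho : BallotCounts m a o) :
    IsTwoRowSSYT a (![rowOfCounts o, rowOfCounts (a - o)] : Fin 2 → Fin m → ℕ) := by
  obtain ⟨hoa, hsum, hballot⟩ := ho
  have hsum' : ∑ j, (a - o) j = m := by
    have : ∑ j, ((a - o) j + o j) = ∑ j, a j :=
      sum_congr rfl fun j _ => Nat.sub_add_cancel (hoa j)
    rw [sum_add_distrib] at this
    omega
  have hb0 := rowOfCounts_mem_Icc hsum
  have hb1 := rowOfCounts_mem_Icc hsum'
  refine ⟨fun i => ?_, ?_, fun j => ?_, fun i => ?_⟩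
  · fin_cases i
    exacts [monotone_rowOfCounts o, monotone_rowOfCounts (a - o)]
  · refine lt_of_card_le_card (monotone_rowOfCounts o) (monotone_rowOfCounts _) fun c => ?_
    obtain ⟨j, hj⟩ : ∃ j : Fin q, rowOfCounts (a - o) c = j + 1 :=
      ⟨⟨rowOfCounts (a - o) c - 1, by have := hb1 c; omega⟩, by have := hb1 c; simp; omega⟩
    simp only [Matrix.cons_val_zero, Matrix.cons_val_one, hj, Nat.lt_succ_iff]
    rw [card_le_eq_prefixSum_rowCount hb1, rowCount_rowOfCounts hsum',
      card_le_eq_prefixSum_rowCount hb0, rowCount_rowOfCounts hsum]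
    exact hballot j
  · rw [entryCount_eq_add]
    change rowCount q (rowOfCounts o) j + rowCount q (rowOfCounts (a - o)) j = a j
    rw [rowCount_rowOfCounts hsum, rowCount_rowOfCounts hsum', Pi.sub_apply]
    have := hoa j
    omega
  · fin_cases i
    exacts [hb0, hb1]

def ballotCountsEquivTwoRowSSYT {a : Fin q → ℕ} (ha : ∑ j, a j = 2 * m) :
    {o : Fin q → ℕ // BallotCounts m a o} ≃ {T : Fin 2 → Fin m → ℕ // IsTwoRowSSYT a T} where
  toFun o := ⟨![rowOfCounts o.1, rowOfCounts (a - o.1)], isTwoRowSSYT_of_ballotCounts ha o.2⟩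
  invFun T := ⟨rowCount q (T.1 0), ballotCounts_rowCount T.2⟩
  left_inv o := Subtype.ext (rowCount_rowOfCounts o.2.2.1)
  right_inv T := by
    obtain ⟨T, hT⟩ := T
    refine Subtype.ext (funext fun i => ?_)
    fin_cases i
    · exact rowOfCounts_rowCount (hT.1 0) (hT.2.2.2 0)
    · simpa [sub_rowCount_zero hT] using rowOfCounts_rowCount (hT.1 1) (hT.2.2.2 1)

end Tableau

end GroupedNoncrossing

open GroupedNoncrossing in
theorem card_grouped_noncrossing_matchings_eq_kostka_general
    (d q : ℕ) (a : Fin q → ℕ)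
    (hsum : ∑ j, a j = 2 * d - 2)
    (g : Fin (2 * d - 2) → Fin q) (hg : Monotone g)
    (hfiber : ∀ j, (Finset.univ.filter fun i => g i = j).card = a j) :
    Nat.card {f : Fin (2 * d - 2) → Fin (2 * d - 2) //
        NoncrossingMatching f ∧ ∀ i, g (f i) ≠ g i}
    = Nat.card {T : Fin 2 → Fin (d - 1) → ℕ //
        (∀ i, Monotone (T i)) ∧
        (∀ j, T 0 j < T 1 j) ∧
        (∀ j : Fin q, entryCount T ((j : ℕ) + 1) = a j) ∧
        (∀ i j, 1 ≤ T i j ∧ T i j ≤ q)} := by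
  have hN : 2 * d - 2 = 2 * (d - 1) := by omega
  exact Nat.card_congr <| (matchingEquivWord g hg).trans <|
    (wordEquivBallotCounts g hg hfiber hN).trans (ballotCountsEquivTwoRowSSYT (hsum.trans hN))

/-- Given separated finite sets `A 1, …, A q` on the real line with
`|A j| = a j + 1` and `Σ a j = 2d - 2`, the number of non-crossing perfect matchings of
`2d - 2` linearly ordered points, partitioned into `q` consecutive groups of sizes
`a 1, …, a q` (via a monotone surjective grouping map `g` with fibers of cardinality `a j`),
with no chord joining two points of the same group, equals the Kostka number
`K_{(a 1, …, a q)}` of shape `2 × (d-1)`, i.e. the number of SSYT of shape `2 × (d-1)`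
in which the entry `j` appears exactly `a j` times. -/
theorem card_grouped_noncrossing_matchings_eq_kostka
    (d q : ℕ) (hd : 1 ≤ d) (a : Fin q → ℕ)
    (A : Fin q → Finset ℝ)
    (hcard : ∀ j, (A j).card = a j + 1)
    (hsep : ∀ i j : Fin q, i < j → ∀ x ∈ A i, ∀ y ∈ A j, x < y)
    (ha : ∀ j, 1 ≤ a j) (hsum : ∑ j, a j = 2 * d - 2)
    (g : Fin (2 * d - 2) → Fin q) (hg : Monotone g)
    (hfiber : ∀ j, (Finset.univ.filter fun i => g i = j).card = a j) :
    Nat.card {f : Fin (2 * d - 2) → Fin (2 * d - 2) //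
        NoncrossingMatching f ∧ ∀ i, g (f i) ≠ g i}
    = Nat.card {T : Fin 2 → Fin (d - 1) → ℕ //
        (∀ i, Monotone (T i)) ∧
        (∀ j, T 0 j < T 1 j) ∧
        (∀ j : Fin q, entryCount T ((j : ℕ) + 1) = a j) ∧
        (∀ i j, 1 ≤ T i j ∧ T i j ≤ q)} :=
  card_grouped_noncrossing_matchings_eq_kostka_general d q a hsum g hg hfiber
end

section
/- The map described in Part A of Lemma 3 is a bijection: semistandard Young tableaux of shape 2×(d-1) with content (a_1,...,a_q) are in bijection with non-crossing perfect matchings on 2d-2 linearly ordered points grouped into consecutive blocks of sizes a_1,...,a_q such that no chord joins two points in the same block. Explicitly, given such a tableau, reading cells in a canonical order and pairing each second-row entry k with the rightmost available first-row entry m < k yields such a matching, and this map is invertible. -/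
/-!
Both sides are in bijection with Dyck words `w : Fin N → Bool` (`true` an up-step) in which,
inside every block, the down-steps precede the up-steps. A tableau gives the word whose block `t`
consists of as many down-steps as its second row has entries `t + 1`, followed by up-steps;
column strictness of the tableau is then exactly the ballot condition of the word. A noncrossing
matching gives the word whose up-steps are the left endpoints of the chords, and conversely each
up-step is matched with the first later step returning the path to its level. A chord inside a
block is an up-step followed by a down-step in that block.
-/

open Finset

namespace SSYTMatching

variable {N : ℕ}

def countBefore (w : Fin N → Bool) (b : Bool) (k : ℕ) : ℕ :=
  #{i : Fin N | (i : ℕ) < k ∧ w i = b}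

def positions (w : Fin N → Bool) (b : Bool) : Finset (Fin N) := {i | w i = b}

def height (w : Fin N → Bool) (k : ℕ) : ℤ := countBefore w true k - countBefore w false k

section countBefore

variable (w : Fin N → Bool) (b : Bool)

lemma countBefore_zero : countBefore w b 0 = 0 := by
  simp [countBefore]

lemma countBefore_eq_add {k m : ℕ} (h : k ≤ m) :
    countBefore w b m = countBefore w b k + #{i : Fin N | k ≤ i ∧ i < m ∧ w i = b} := by
  rw [countBefore, countBefore,
    ← card_union_of_disjoint (disjoint_filter.2 fun i _ h₁ h₂ => by omega), ← filter_or]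
  congr 1; ext i
  by_cases hw : w i = b
  · simp only [mem_filter, mem_univ, hw, and_true, true_and]
    omega
  · simp only [mem_filter, mem_univ, hw, and_false, or_self]

lemma countBefore_succ (p : Fin N) :
    countBefore w b (p + 1) = countBefore w b p + if w p = b then 1 else 0 := by
  rw [countBefore_eq_add w b (Nat.le_succ p), card_filter, sum_eq_single p]
  · simp
  · intro i _ hi
    rw [if_neg]
    rintro ⟨h₁, h₂, -⟩
    exact hi (Fin.ext (by omega))
  · simp

lemma countBefore_of_le {k : ℕ} (h : N ≤ k) : countBefore w b k = countBefore w b N := by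
  simp only [countBefore]
  congr 1; ext i
  simp [i.isLt.trans_le h]

lemma countBefore_end : countBefore w b N = #(positions w b) := by
  simp [countBefore, positions]

lemma countBefore_succ_eq_card_le (p : Fin N) :
    countBefore w b (p + 1) = #{i ∈ positions w b | i ≤ p} := by
  rw [countBefore, positions, filter_filter]
  congr 1; ext i
  simp only [mem_filter, mem_univ, true_and, Nat.lt_succ_iff, ← Fin.le_def, and_comm]

end countBefore

lemma height_zero (w : Fin N → Bool) : height w 0 = 0 := by
  simp [height, countBefore_zero]

lemma height_sub_height (w : Fin N → Bool) {k m : ℕ} (h : k ≤ m) :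
    height w m - height w k =
      (#{i ∈ (univ.filter fun i : Fin N => k ≤ i ∧ i < m) | w i = true} : ℤ) -
        #{i ∈ (univ.filter fun i : Fin N => k ≤ i ∧ i < m) | w i = false} := by
  simp only [height, countBefore_eq_add w _ h, filter_filter, and_assoc]
  push_cast
  ring

lemma height_succ (w : Fin N → Bool) (p : Fin N) :
    height w (p + 1) = height w p + if w p then 1 else -1 := by
  simp only [height, countBefore_succ]
  cases w p <;> simp only [Bool.false_eq_true, Bool.true_eq_false, ↓reduceIte] <;> push_cast <;>
    ring

structure IsDyckWord (w : Fin N → Bool) : Prop where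
  height_nonneg : ∀ k, 0 ≤ height w k
  height_end : height w N = 0

def returnsAfter (w : Fin N → Bool) (i : Fin N) : Finset (Fin N) :=
  {j | i < j ∧ height w (j + 1) ≤ height w i}

def returnsBefore (w : Fin N → Bool) (i : Fin N) : Finset (Fin N) :=
  {j | j < i ∧ height w j ≤ height w (i + 1)}

/-- An up-step is matched with the first later down-step returning to its level, a down-step
with the last earlier up-step leaving its level. -/
noncomputable def matchingOfWord (w : Fin N → Bool) (i : Fin N) : Fin N :=
  if w i then (if h : (returnsAfter w i).Nonempty then (returnsAfter w i).min' h else i)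
  else (if h : (returnsBefore w i).Nonempty then (returnsBefore w i).max' h else i)

namespace IsDyckWord

variable {w : Fin N → Bool} (hw : IsDyckWord w) {i : Fin N}
include hw

lemma returnsAfter_nonempty (hi : w i = true) : (returnsAfter w i).Nonempty := by
  have hstep := height_succ w i
  have hN := hw.height_end
  have hi₀ := hw.height_nonneg i
  rw [hi, if_pos rfl] at hstep
  have hlast : (i : ℕ) + 1 < N := by
    refine lt_of_le_of_ne i.isLt fun h => ?_
    rw [h] at hstep
    omega
  refine ⟨⟨N - 1, by omega⟩, ?_⟩
  simp only [returnsAfter, mem_filter, mem_univ, true_and, Fin.lt_def]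
  refine ⟨by omega, ?_⟩
  rw [Nat.sub_add_cancel (by omega), hN]
  exact hi₀

lemma returnsBefore_nonempty (hi : w i = false) : (returnsBefore w i).Nonempty := by
  have hstep := height_succ w i
  have hi₁ := hw.height_nonneg (i + 1)
  rw [hi, if_neg Bool.false_ne_true] at hstep
  have hpos : 0 < (i : ℕ) := by
    refine Nat.pos_of_ne_zero fun h => ?_
    simp only [h, height_zero] at hstep hi₁
    omega
  refine ⟨⟨0, by omega⟩, ?_⟩
  simp only [returnsBefore, mem_filter, mem_univ, true_and, Fin.lt_def, height_zero]
  exact ⟨hpos, hi₁⟩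

lemma matchingOfWord_of_true (hi : w i = true) :
    matchingOfWord w i = (returnsAfter w i).min' (hw.returnsAfter_nonempty hi) := by
  simp [matchingOfWord, hi, hw.returnsAfter_nonempty hi]

lemma matchingOfWord_of_false (hi : w i = false) :
    matchingOfWord w i = (returnsBefore w i).max' (hw.returnsBefore_nonempty hi) := by
  simp [matchingOfWord, hi, hw.returnsBefore_nonempty hi]

lemma matchingOfWord_mem_returnsAfter (hi : w i = true) :
    matchingOfWord w i ∈ returnsAfter w i :=
  hw.matchingOfWord_of_true hi ▸ min'_mem _ _

lemma matchingOfWord_mem_returnsBefore (hi : w i = false) :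
    matchingOfWord w i ∈ returnsBefore w i :=
  hw.matchingOfWord_of_false hi ▸ max'_mem _ _

lemma matchingOfWord_le_of_mem (hi : w i = true) {j : Fin N} (hj : j ∈ returnsAfter w i) :
    matchingOfWord w i ≤ j :=
  hw.matchingOfWord_of_true hi ▸ min'_le _ _ hj

lemma le_matchingOfWord_of_mem (hi : w i = false) {j : Fin N} (hj : j ∈ returnsBefore w i) :
    j ≤ matchingOfWord w i :=
  hw.matchingOfWord_of_false hi ▸ le_max' _ _ hj

lemma lt_matchingOfWord (hi : w i = true) : i < matchingOfWord w i :=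
  (mem_filter.1 (hw.matchingOfWord_mem_returnsAfter hi)).2.1

lemma matchingOfWord_lt (hi : w i = false) : matchingOfWord w i < i :=
  (mem_filter.1 (hw.matchingOfWord_mem_returnsBefore hi)).2.1

lemma height_lt_of_lt_of_le_matchingOfWord (hi : w i = true) {m : ℕ} (him : (i : ℕ) < m)
    (hm : m ≤ matchingOfWord w i) : height w i < height w m := by
  by_contra! hle
  have hm₀ : m - 1 < N := by have := (matchingOfWord w i).isLt; omega
  have hstep := height_succ w i
  rw [hi, if_pos rfl] at hstep
  have hmi : (i : ℕ) + 1 < m := by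
    refine lt_of_le_of_ne him fun h => ?_
    rw [← h] at hle
    omega
  have hmem : (⟨m - 1, hm₀⟩ : Fin N) ∈ returnsAfter w i := by
    simp only [returnsAfter, mem_filter, mem_univ, true_and, Fin.lt_def]
    exact ⟨by omega, by rwa [Nat.sub_add_cancel (by omega)]⟩
  have : (matchingOfWord w i : ℕ) ≤ m - 1 := hw.matchingOfWord_le_of_mem hi hmem
  omega

lemma height_lt_of_matchingOfWord_lt_of_le (hi : w i = false) {m : ℕ}
    (hm : (matchingOfWord w i : ℕ) < m) (hmi : m ≤ i) : height w (i + 1) < height w m := by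
  by_contra! hle
  have hstep := height_succ w i
  rw [hi, if_neg Bool.false_ne_true] at hstep
  have hmi' : m < (i : ℕ) := by
    refine lt_of_le_of_ne hmi fun h => ?_
    rw [h] at hle
    omega
  have hmem : (⟨m, by omega⟩ : Fin N) ∈ returnsBefore w i := by
    simp only [returnsBefore, mem_filter, mem_univ, true_and, Fin.lt_def]
    exact ⟨hmi', hle⟩
  have : m ≤ (matchingOfWord w i : ℕ) := hw.le_matchingOfWord_of_mem hi hmem
  omega

lemma apply_matchingOfWord_of_true (hi : w i = true) : w (matchingOfWord w i) = false := by
  have hle := (mem_filter.1 (hw.matchingOfWord_mem_returnsAfter hi)).2.2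
  have hlt := hw.height_lt_of_lt_of_le_matchingOfWord hi (hw.lt_matchingOfWord hi) le_rfl
  have hstep := height_succ w (matchingOfWord w i)
  by_contra hj
  rw [Bool.not_eq_false] at hj
  rw [hj, if_pos rfl] at hstep
  omega

lemma height_matchingOfWord_succ (hi : w i = true) :
    height w (matchingOfWord w i + 1) = height w i := by
  have hle := (mem_filter.1 (hw.matchingOfWord_mem_returnsAfter hi)).2.2
  have hlt := hw.height_lt_of_lt_of_le_matchingOfWord hi (hw.lt_matchingOfWord hi) le_rfl
  have hstep := height_succ w (matchingOfWord w i)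
  rw [hw.apply_matchingOfWord_of_true hi, if_neg Bool.false_ne_true] at hstep
  omega

lemma apply_matchingOfWord_of_false (hi : w i = false) : w (matchingOfWord w i) = true := by
  have hle := (mem_filter.1 (hw.matchingOfWord_mem_returnsBefore hi)).2.2
  have hlt := hw.height_lt_of_matchingOfWord_lt_of_le hi (m := matchingOfWord w i + 1)
    (Nat.lt_succ_self _) (hw.matchingOfWord_lt hi)
  have hstep := height_succ w (matchingOfWord w i)
  by_contra hj
  rw [Bool.not_eq_true] at hj
  rw [hj, if_neg Bool.false_ne_true] at hstep
  omega

lemma height_matchingOfWord_of_false (hi : w i = false) :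
    height w (matchingOfWord w i) = height w (i + 1) := by
  have hle := (mem_filter.1 (hw.matchingOfWord_mem_returnsBefore hi)).2.2
  have hlt := hw.height_lt_of_matchingOfWord_lt_of_le hi (m := matchingOfWord w i + 1)
    (Nat.lt_succ_self _) (hw.matchingOfWord_lt hi)
  have hstep := height_succ w (matchingOfWord w i)
  rw [hw.apply_matchingOfWord_of_false hi, if_pos rfl] at hstep
  omega

lemma matchingOfWord_matchingOfWord (i : Fin N) : matchingOfWord w (matchingOfWord w i) = i := by
  cases hi : w i
  · have hj := hw.apply_matchingOfWord_of_false hi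
    have hH := hw.height_matchingOfWord_of_false hi
    have hji := hw.matchingOfWord_lt hi
    refine le_antisymm (hw.matchingOfWord_le_of_mem hj ?_) (not_lt.1 fun hlt => ?_)
    · simp only [returnsAfter, mem_filter, mem_univ, true_and]
      exact ⟨hji, hH.ge⟩
    · have hk := (mem_filter.1 (hw.matchingOfWord_mem_returnsAfter hj)).2
      have := hw.height_lt_of_matchingOfWord_lt_of_le hi
        (m := matchingOfWord w (matchingOfWord w i) + 1) (by omega) (by omega)
      omega
  · have hj := hw.apply_matchingOfWord_of_true hi
    have hH := hw.height_matchingOfWord_succ hi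
    have hij := hw.lt_matchingOfWord hi
    refine le_antisymm (not_lt.1 fun hlt => ?_) (hw.le_matchingOfWord_of_mem hj ?_)
    · have hk := (mem_filter.1 (hw.matchingOfWord_mem_returnsBefore hj)).2
      have := hw.height_lt_of_lt_of_le_matchingOfWord hi
        (m := matchingOfWord w (matchingOfWord w i)) hlt (by omega)
      omega
    · simp only [returnsBefore, mem_filter, mem_univ, true_and]
      exact ⟨hij, hH.ge⟩

lemma matchingOfWord_ne (i : Fin N) : matchingOfWord w i ≠ i := by
  cases hi : w i
  · exact (hw.matchingOfWord_lt hi).ne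
  · exact (hw.lt_matchingOfWord hi).ne'

/-- Two crossing up-steps `a < c` would force `height a < height c < height a`. -/
lemma not_crossing_matchingOfWord :
    ¬∃ a c : Fin N, a < c ∧ c < matchingOfWord w a ∧
      matchingOfWord w a < matchingOfWord w c := by
  rintro ⟨a, c, hac, hca, hac'⟩
  have hwa : w a = true := by
    by_contra h
    have := hw.matchingOfWord_lt (Bool.eq_false_iff.2 h)
    omega
  have hwc : w c = true := by
    by_contra h
    have := hw.matchingOfWord_lt (Bool.eq_false_iff.2 h)
    omega
  have h₁ := hw.height_lt_of_lt_of_le_matchingOfWord hwa hac hca.le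
  have h₂ := hw.height_lt_of_lt_of_le_matchingOfWord hwc (m := matchingOfWord w a + 1)
    (by omega) (by omega)
  have h₃ := hw.height_matchingOfWord_succ hwa
  omega

lemma noncrossingMatching_matchingOfWord : NoncrossingMatching (matchingOfWord w) :=
  ⟨hw.matchingOfWord_matchingOfWord, hw.matchingOfWord_ne, hw.not_crossing_matchingOfWord⟩

end IsDyckWord

def wordOfMatching (f : Fin N → Fin N) (i : Fin N) : Bool := decide (i < f i)

section wordOfMatching

variable {f : Fin N → Fin N} {i : Fin N}

lemma wordOfMatching_eq_true_iff : wordOfMatching f i = true ↔ i < f i := by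
  simp [wordOfMatching]

lemma wordOfMatching_eq_false_iff (hf : NoncrossingMatching f) :
    wordOfMatching f i = false ↔ f i < i := by
  simpa [wordOfMatching] using (hf.2.1 i).le_iff_lt

lemma apply_mem_Ioo (hf : NoncrossingMatching f) {j : Fin N} (hj : j ∈ Set.Ioo i (f i)) :
    f j ∈ Set.Ioo i (f i) := by
  obtain ⟨hinv, hne, hnc⟩ := hf
  obtain ⟨hij, hj⟩ := hj
  have hfj : f j ≠ f i := hinv.injective.ne hij.ne'
  have hfj' : f j ≠ i := fun h => hj.ne (by rw [← h, hinv])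
  rcases (hne j).lt_or_gt with hjc | hjo
  · refine ⟨lt_of_not_ge fun h => hnc ⟨f j, i, ?_, ?_, ?_⟩, hjc.trans hj⟩
    · exact lt_of_le_of_ne h hfj'
    · rwa [hinv]
    · rwa [hinv]
  · exact ⟨hij.trans hjo,
      lt_of_not_ge fun h => hnc ⟨i, j, hij, hj, lt_of_le_of_ne h hfj.symm⟩⟩

lemma card_closers_le_card_openers (hf : NoncrossingMatching f) {s : Finset (Fin N)}
    (hs : ∀ p ∈ s, f p < p → f p ∈ s) :
    #{p ∈ s | wordOfMatching f p = false} ≤ #{p ∈ s | wordOfMatching f p = true} := by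
  refine card_le_card_of_injOn f (fun p hp => ?_) hf.1.injective.injOn
  simp only [mem_coe, mem_filter, wordOfMatching_eq_false_iff hf,
    wordOfMatching_eq_true_iff, hf.1 p] at hp ⊢
  exact ⟨hs p hp.1 hp.2, hp.2⟩

lemma card_closers_eq_card_openers (hf : NoncrossingMatching f) {s : Finset (Fin N)}
    (hs : ∀ p ∈ s, f p ∈ s) :
    #{p ∈ s | wordOfMatching f p = false} = #{p ∈ s | wordOfMatching f p = true} := by
  refine (card_closers_le_card_openers hf fun p hp _ => hs p hp).antisymm
    (card_le_card_of_injOn f (fun p hp => ?_) hf.1.injective.injOn)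
  simp only [mem_coe, mem_filter, wordOfMatching_eq_false_iff hf,
    wordOfMatching_eq_true_iff, hf.1 p] at hp ⊢
  exact ⟨hs p hp.1, hp.2⟩

lemma isDyckWord_wordOfMatching (hf : NoncrossingMatching f) : IsDyckWord (wordOfMatching f) := by
  have hball : ∀ k,
      countBefore (wordOfMatching f) false k ≤ countBefore (wordOfMatching f) true k := by
    intro k
    have := card_closers_le_card_openers hf (s := univ.filter fun p : Fin N => p < k)
      fun p hp hfp => by simp only [mem_filter, mem_univ, true_and] at hp ⊢; omega
    simpa only [countBefore, filter_filter] using this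
  have hbal := card_closers_eq_card_openers hf (s := univ) fun p _ => mem_univ (f p)
  refine ⟨fun k => sub_nonneg.2 (by exact_mod_cast hball k), ?_⟩
  rw [height, countBefore_end, countBefore_end]
  simp only [positions]
  rw [hbal, sub_self]

lemma height_lt_height_wordOfMatching (hf : NoncrossingMatching f) (hi : i < f i) {m : ℕ}
    (him : (i : ℕ) < m) (hm : m ≤ f i) :
    height (wordOfMatching f) i < height (wordOfMatching f) m := by
  have hstep := height_succ (wordOfMatching f) i
  rw [wordOfMatching_eq_true_iff.2 hi, if_pos rfl] at hstep
  have hdiff := height_sub_height (wordOfMatching f) (show (i : ℕ) + 1 ≤ m by omega)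
  have := card_closers_le_card_openers hf
    (s := univ.filter fun p : Fin N => (i : ℕ) + 1 ≤ p ∧ p < m) fun p hp hfp => by
      simp only [mem_filter, mem_univ, true_and] at hp ⊢
      have := (apply_mem_Ioo hf (i := i) (j := p) ⟨by omega, by omega⟩).1
      omega
  have : (0 : ℤ) ≤ height (wordOfMatching f) m - height (wordOfMatching f) (i + 1) := by
    rw [hdiff]; exact sub_nonneg.2 (by exact_mod_cast this)
  omega

lemma height_wordOfMatching_apply_succ (hf : NoncrossingMatching f) (hi : i < f i) :
    height (wordOfMatching f) (f i + 1) = height (wordOfMatching f) i := by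
  have hstep := height_succ (wordOfMatching f) i
  rw [wordOfMatching_eq_true_iff.2 hi, if_pos rfl] at hstep
  have hstep' := height_succ (wordOfMatching f) (f i)
  rw [(wordOfMatching_eq_false_iff hf).2 (by rwa [hf.1 i]), if_neg Bool.false_ne_true] at hstep'
  have hdiff := height_sub_height (wordOfMatching f) (show (i : ℕ) + 1 ≤ f i by omega)
  rw [card_closers_eq_card_openers hf fun p hp => by
      simp only [mem_filter, mem_univ, true_and] at hp ⊢
      obtain ⟨h₁, h₂⟩ := apply_mem_Ioo hf (i := i) (j := p) ⟨by omega, by omega⟩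
      omega, sub_self] at hdiff
  omega

lemma matchingOfWord_wordOfMatching (hf : NoncrossingMatching f) :
    matchingOfWord (wordOfMatching f) = f := by
  have hw := isDyckWord_wordOfMatching hf
  have hopen : ∀ i, i < f i → matchingOfWord (wordOfMatching f) i = f i := by
    intro i hi
    have hwi := wordOfMatching_eq_true_iff.2 hi
    refine le_antisymm (hw.matchingOfWord_le_of_mem hwi ?_) (not_lt.1 fun hlt => ?_)
    · simp only [returnsAfter, mem_filter, mem_univ, true_and]
      exact ⟨hi, (height_wordOfMatching_apply_succ hf hi).le⟩
    · have hk := (mem_filter.1 (hw.matchingOfWord_mem_returnsAfter hwi)).2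
      have := height_lt_height_wordOfMatching hf hi
        (m := matchingOfWord (wordOfMatching f) i + 1) (by omega) (by omega)
      omega
  funext i
  rcases (hf.2.1 i).lt_or_gt with hi | hi
  · have := congrArg (matchingOfWord (wordOfMatching f)) (hopen (f i) (by rwa [hf.1 i]))
    rwa [hw.matchingOfWord_matchingOfWord, hf.1 i, eq_comm] at this
  · exact hopen i hi

lemma IsDyckWord.wordOfMatching_matchingOfWord {w : Fin N → Bool}
    (hw : IsDyckWord w) : wordOfMatching (matchingOfWord w) = w := by
  funext i
  cases hi : w i
  · simpa [wordOfMatching] using (hw.matchingOfWord_lt hi).le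
  · simpa [wordOfMatching] using hw.lt_matchingOfWord hi

end wordOfMatching

/-- In each fiber of `g`, all down-steps of `w` come before all up-steps. -/
def MonotoneOnFibers {q : ℕ} (g : Fin N → Fin q) (w : Fin N → Bool) : Prop :=
  ∀ ⦃i j⦄, i ≤ j → g i = g j → w i = true → w j = true

section fibers

variable {q : ℕ} {g : Fin N → Fin q}

lemma IsDyckWord.apply_matchingOfWord_ne {w : Fin N → Bool} (hw : IsDyckWord w)
    (hgw : MonotoneOnFibers g w) (i : Fin N) : g (matchingOfWord w i) ≠ g i := by
  intro hg
  cases hi : w i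
  · have := hgw (hw.matchingOfWord_lt hi).le hg (hw.apply_matchingOfWord_of_false hi)
    rw [hi] at this
    exact Bool.false_ne_true this
  · have := hgw (hw.lt_matchingOfWord hi).le hg.symm hi
    rw [hw.apply_matchingOfWord_of_true hi] at this
    exact Bool.false_ne_true this

lemma monotoneOnFibers_wordOfMatching {f : Fin N → Fin N} (hf : NoncrossingMatching f)
    (hg : Monotone g) (hfg : ∀ i, g (f i) ≠ g i) : MonotoneOnFibers g (wordOfMatching f) := by
  intro i j hij hgij hi
  rw [wordOfMatching_eq_true_iff] at hi ⊢
  by_contra! hj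
  have hj' : f j < j := lt_of_le_of_ne hj (hf.2.1 j)
  have hgi : g i < g (f i) := lt_of_le_of_ne (hg hi.le) (hfg i).symm
  have hgj : g (f j) < g j := lt_of_le_of_ne (hg hj'.le) (hfg j)
  have h₁ : f j < i := lt_of_not_ge fun h => (hg h).not_gt (hgij ▸ hgj)
  have h₂ : j < f i := lt_of_not_ge fun h => (hg h).not_gt (hgij ▸ hgi)
  have hij' : i < j := lt_of_le_of_ne hij (by rintro rfl; exact hj.not_gt hi)
  exact hf.2.2 ⟨f j, i, h₁, by rwa [hf.1 j], by rwa [hf.1 j]⟩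

noncomputable def matchingEquivWord (hg : Monotone g) :
    {f : Fin N → Fin N // NoncrossingMatching f ∧ ∀ i, g (f i) ≠ g i} ≃
      {w : Fin N → Bool // IsDyckWord w ∧ MonotoneOnFibers g w} where
  toFun f := ⟨wordOfMatching f, isDyckWord_wordOfMatching f.2.1,
    monotoneOnFibers_wordOfMatching f.2.1 hg f.2.2⟩
  invFun w := ⟨matchingOfWord w, w.2.1.noncrossingMatching_matchingOfWord,
    w.2.1.apply_matchingOfWord_ne w.2.2⟩
  left_inv f := Subtype.ext (matchingOfWord_wordOfMatching f.2.1)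
  right_inv w := Subtype.ext w.2.1.wordOfMatching_matchingOfWord

end fibers

section orderEmbOfFin

variable {α : Type*} [LinearOrder α] (s : Finset α) {m : ℕ} (h : #s = m)

lemma card_filter_orderEmbOfFin (P : α → Prop) [DecidablePred P] :
    #{j | P (s.orderEmbOfFin h j)} = #{x ∈ s | P x} := by
  conv_rhs => rw [← s.map_orderEmbOfFin_univ h, filter_map, card_map]
  rfl

lemma orderEmbOfFin_le_iff (j : Fin m) (x : α) :
    s.orderEmbOfFin h j ≤ x ↔ (j : ℕ) < #{y ∈ s | y ≤ x} := by
  rw [← card_filter_orderEmbOfFin s h]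
  exact (Fin.lt_card_filter_univ_iff_apply_of_imp _ fun i k hki hi =>
    ((s.orderEmbOfFin h).monotone hki).trans hi).symm

end orderEmbOfFin

section tuple

variable {m q : ℕ}

lemma card_filter_le_eq_sum {s : Fin m → ℕ} (hs : ∀ j, 1 ≤ s j ∧ s j ≤ q) (v : ℕ) :
    #{j | s j ≤ v} = ∑ t : Fin q with t.val + 1 ≤ v, #{j | s j = t + 1} := by
  let f : Fin m → Fin q := fun j => ⟨s j - 1, by have := hs j; omega⟩
  have hf : ∀ j t, f j = t ↔ s j = t + 1 := fun j t => by
    have := hs j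
    simp only [f, Fin.ext_iff]
    omega
  rw [card_eq_sum_card_fiberwise (f := f) (t := univ.filter fun t : Fin q => (t : ℕ) + 1 ≤ v)]
  · refine sum_congr rfl fun t ht => congrArg card ?_
    ext j
    simp only [mem_filter, mem_univ, true_and] at ht ⊢
    rw [hf]
    constructor
    · exact And.right
    · intro hj; exact ⟨hj ▸ ht, hj⟩
  · intro j hj
    simp only [mem_coe, mem_filter, mem_univ, true_and] at hj ⊢
    have := (hf j (f j)).1 rfl
    omega

lemma eq_of_monotone_of_card_eq {s u : Fin m → ℕ} (hs : Monotone s) (hu : Monotone u)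
    (hs' : ∀ j, 1 ≤ s j ∧ s j ≤ q) (hu' : ∀ j, 1 ≤ u j ∧ u j ≤ q)
    (h : ∀ t : Fin q, #{j | s j = t + 1} = #{j | u j = t + 1}) : s = u := by
  have hle : ∀ v, #{j | s j ≤ v} = #{j | u j ≤ v} := fun v => by
    rw [card_filter_le_eq_sum hs', card_filter_le_eq_sum hu']
    exact sum_congr rfl fun t _ => h t
  funext j
  apply le_antisymm
  · rw [← Tuple.lt_card_le_iff_apply_le_of_monotone hs, hle,
      Tuple.lt_card_le_iff_apply_le_of_monotone hu]
  · rw [← Tuple.lt_card_le_iff_apply_le_of_monotone hu, ← hle,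
      Tuple.lt_card_le_iff_apply_le_of_monotone hs]

end tuple

section fiberCount

variable {N q : ℕ}

def fiberCount (g : Fin N → Fin q) (w : Fin N → Bool) (b : Bool) (t : Fin q) : ℕ :=
  #{p | g p = t ∧ w p = b}

variable (g : Fin N → Fin q) (w : Fin N → Bool) (b : Bool)

lemma fiberCount_true_add_false (t : Fin q) :
    fiberCount g w true t + fiberCount g w false t = #{p | g p = t} := by
  rw [fiberCount, fiberCount, ← filter_filter, ← filter_filter]
  convert card_filter_add_card_filter_not (s := ({p | g p = t} : Finset (Fin N))) (w · = true)
  simp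

lemma sum_fiberCount (S : Finset (Fin q)) :
    ∑ t ∈ S, fiberCount g w b t = #{p | g p ∈ S ∧ w p = b} := by
  rw [card_eq_sum_card_fiberwise (f := g) (t := S) fun p hp => (mem_filter.1 hp).2.1]
  refine sum_congr rfl fun t ht => ?_
  rw [fiberCount, filter_filter]
  refine congrArg card (filter_congr fun p _ => ?_)
  constructor
  · rintro ⟨rfl, hp⟩; exact ⟨⟨ht, hp⟩, rfl⟩
  · rintro ⟨⟨-, hp⟩, rfl⟩; exact ⟨rfl, hp⟩

variable {g}

lemma countBefore_le_sum_fiberCount (hg : Monotone g) (p : Fin N) :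
    countBefore w b (p + 1) ≤ ∑ t with t ≤ g p, fiberCount g w b t := by
  rw [sum_fiberCount]
  refine card_le_card fun i hi => ?_
  simp only [mem_filter, mem_univ, true_and] at hi ⊢
  exact ⟨hg (by omega), hi.2⟩

lemma sum_fiberCount_le_countBefore (hg : Monotone g) (p : Fin N) :
    ∑ t with t < g p, fiberCount g w b t ≤ countBefore w b (p + 1) := by
  rw [sum_fiberCount]
  refine card_le_card fun i hi => ?_
  simp only [mem_filter, mem_univ, true_and] at hi ⊢
  exact ⟨by have := hg.reflect_lt hi.1; omega, hi.2⟩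

end fiberCount

section tableau

variable {N m q : ℕ} {g : Fin N → Fin q} {a : Fin q → ℕ}

def rowCount (T : Fin 2 → Fin m → ℕ) (i : Fin 2) (t : Fin q) : ℕ := #{j | T i j = t + 1}

structure IsSSYT (q : ℕ) (a : Fin q → ℕ) (T : Fin 2 → Fin m → ℕ) : Prop where
  monotone_row : ∀ i, Monotone (T i)
  lt_col : ∀ j, T 0 j < T 1 j
  entryCount_eq : ∀ t : Fin q, entryCount T (t + 1) = a t
  bounds : ∀ i j, 1 ≤ T i j ∧ T i j ≤ q

lemma isSSYT_iff {T : Fin 2 → Fin m → ℕ} :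
    IsSSYT q a T ↔ (∀ i, Monotone (T i)) ∧ (∀ j, T 0 j < T 1 j) ∧
      (∀ t : Fin q, entryCount T (t + 1) = a t) ∧ ∀ i j, 1 ≤ T i j ∧ T i j ≤ q :=
  ⟨fun h => ⟨h.1, h.2, h.3, h.4⟩, fun h => ⟨h.1, h.2.1, h.2.2.1, h.2.2.2⟩⟩

lemma entryCount_eq_rowCount_add (T : Fin 2 → Fin m → ℕ) (t : Fin q) :
    entryCount T (t + 1) = rowCount T 0 t + rowCount T 1 t := by
  rw [entryCount, card_filter, rowCount, rowCount, card_filter, card_filter,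
    Fintype.sum_prod_type, Fin.sum_univ_two]

namespace IsSSYT

variable {T : Fin 2 → Fin m → ℕ} (hT : IsSSYT q a T)
include hT

lemma sum_rowCount (i : Fin 2) : ∑ t : Fin q, rowCount T i t = m := by
  have h := card_filter_le_eq_sum (hT.bounds i) q
  rw [filter_true_of_mem fun j _ => (hT.bounds i j).2, card_univ, Fintype.card_fin,
    filter_true_of_mem fun t _ => t.isLt] at h
  exact h.symm

lemma rowCount_one_le (t : Fin q) : rowCount T 1 t ≤ a t := by
  have := hT.entryCount_eq t
  rw [entryCount_eq_rowCount_add] at this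
  omega

/-- Column strictness: every entry `≤ t + 1` of the second row sits under an entry `≤ t`. -/
lemma sum_rowCount_one_le (t₀ : Fin q) :
    ∑ t with t ≤ t₀, rowCount T 1 t ≤ ∑ t with t < t₀, rowCount T 0 t := by
  have hcol : #{j | T 1 j ≤ t₀ + 1} ≤ #{j | T 0 j ≤ t₀} :=
    card_le_card fun j hj => by
      simp only [mem_filter, mem_univ, true_and] at hj ⊢
      have := hT.lt_col j
      omega
  rw [card_filter_le_eq_sum (hT.bounds 1), card_filter_le_eq_sum (hT.bounds 0)] at hcol
  convert hcol using 2
  · exact filter_congr fun t _ => by omega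
  · rfl
  · exact filter_congr fun t _ => by omega
  · rfl

end IsSSYT

noncomputable def rowOfWord (m : ℕ) (g : Fin N → Fin q) (w : Fin N → Bool) (b : Bool)
    (j : Fin m) : ℕ :=
  if h : #(positions w b) = m then g ((positions w b).orderEmbOfFin h j) + 1 else 0

noncomputable def tableauOfWord (m : ℕ) (g : Fin N → Fin q) (w : Fin N → Bool) :
    Fin 2 → Fin m → ℕ :=
  ![rowOfWord m g w true, rowOfWord m g w false]

section rowOfWord

variable {w : Fin N → Bool} {b : Bool} (h : #(positions w b) = m)
include h

lemma rowOfWord_eq (j : Fin m) :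
    rowOfWord m g w b j = g ((positions w b).orderEmbOfFin h j) + 1 :=
  dif_pos h

lemma monotone_rowOfWord (hg : Monotone g) : Monotone (rowOfWord m g w b) := by
  intro j k hjk
  simp only [rowOfWord_eq h]
  have := hg ((positions w b).orderEmbOfFin h |>.monotone hjk)
  omega

lemma rowOfWord_bounds (j : Fin m) : 1 ≤ rowOfWord m g w b j ∧ rowOfWord m g w b j ≤ q := by
  rw [rowOfWord_eq h]
  omega

lemma card_rowOfWord_eq (t : Fin q) : #{j | rowOfWord m g w b j = t + 1} = fiberCount g w b t := by
  simp only [rowOfWord_eq h, Nat.add_right_cancel_iff, Fin.val_inj]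
  rw [card_filter_orderEmbOfFin (positions w b) h (g · = t), fiberCount, positions,
    filter_filter]
  exact congrArg card (filter_congr fun _ _ => and_comm)

end rowOfWord

@[simp] lemma tableauOfWord_zero (w : Fin N → Bool) :
    tableauOfWord m g w 0 = rowOfWord m g w true := rfl

@[simp] lemma tableauOfWord_one (w : Fin N → Bool) :
    tableauOfWord m g w 1 = rowOfWord m g w false := rfl

lemma rowCount_tableauOfWord_one {w : Fin N → Bool} (h : #(positions w false) = m) (t : Fin q) :
    rowCount (tableauOfWord m g w) 1 t = fiberCount g w false t :=
  card_rowOfWord_eq h t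

namespace IsDyckWord

variable {w : Fin N → Bool} (hw : IsDyckWord w) (hNm : N = 2 * m)
include hw hNm

lemma card_positions (b : Bool) : #(positions w b) = m := by
  have hsum : #(positions w true) + #(positions w false) = N := by
    simpa [positions] using card_filter_add_card_filter_not (s := (univ : Finset (Fin N)))
      (w · = true)
  have hbal := hw.height_end
  rw [height, countBefore_end, countBefore_end] at hbal
  cases b <;> omega

/-- The `j`-th up-step precedes the `j`-th down-step by the ballot condition, and lies in an
earlier block because no block contains an up-step followed by a down-step. -/
lemma rowOfWord_true_lt_rowOfWord_false (hg : Monotone g) (hgw : MonotoneOnFibers g w)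
    (j : Fin m) : rowOfWord m g w true j < rowOfWord m g w false j := by
  have h₀ := hw.card_positions hNm true
  have h₁ := hw.card_positions hNm false
  rw [rowOfWord_eq h₀, rowOfWord_eq h₁]
  set o := (positions w true).orderEmbOfFin h₀ j
  set c := (positions w false).orderEmbOfFin h₁ j
  have ho : w o = true := (mem_filter.1 (orderEmbOfFin_mem _ h₀ j)).2
  have hc : w c = false := (mem_filter.1 (orderEmbOfFin_mem _ h₁ j)).2
  have hoc : o ≤ c := by
    rw [orderEmbOfFin_le_iff]
    have hc' := (orderEmbOfFin_le_iff (positions w false) h₁ j c).1 le_rfl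
    have := hw.height_nonneg (c + 1)
    rw [height, countBefore_succ_eq_card_le, countBefore_succ_eq_card_le] at this
    omega
  have hg' : g o ≠ g c := fun h => by simpa [hc] using hgw hoc h ho
  have := lt_of_le_of_ne (hg hoc) hg'
  omega

lemma isSSYT_tableauOfWord (hg : Monotone g) (hgw : MonotoneOnFibers g w)
    (hfiber : ∀ t, #{p | g p = t} = a t) : IsSSYT q a (tableauOfWord m g w) where
  monotone_row := Fin.forall_fin_two.2
    ⟨monotone_rowOfWord (hw.card_positions hNm _) hg,
      monotone_rowOfWord (hw.card_positions hNm _) hg⟩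
  lt_col := hw.rowOfWord_true_lt_rowOfWord_false hNm hg hgw
  entryCount_eq t := by
    rw [entryCount_eq_rowCount_add, rowCount, rowCount, tableauOfWord_zero, tableauOfWord_one,
      card_rowOfWord_eq (hw.card_positions hNm _), card_rowOfWord_eq (hw.card_positions hNm _),
      fiberCount_true_add_false, hfiber]
  bounds := Fin.forall_fin_two.2
    ⟨rowOfWord_bounds (hw.card_positions hNm _), rowOfWord_bounds (hw.card_positions hNm _)⟩

end IsDyckWord

def blockStart (g : Fin N → Fin q) (t : Fin q) : ℕ := #{p | g p < t}

/-- Block `t` of the word is `rowCount T 1 t` down-steps followed by up-steps. -/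
def wordOfTableau (g : Fin N → Fin q) (T : Fin 2 → Fin m → ℕ) (p : Fin N) : Bool :=
  blockStart g (g p) + rowCount T 1 (g p) ≤ p

lemma lt_blockStart_iff (hg : Monotone g) {p : Fin N} {t : Fin q} :
    (p : ℕ) < blockStart g t ↔ g p < t :=
  Fin.lt_card_filter_univ_iff_apply_of_imp _ fun _ _ hji hi => (hg hji).trans_lt hi

lemma card_filter_apply_le (hfiber : ∀ t, #{p | g p = t} = a t) (t : Fin q) :
    #{p | g p ≤ t} = blockStart g t + a t := by
  rw [blockStart, ← hfiber,
    ← card_union_of_disjoint (disjoint_filter.2 fun _ _ h h' => h.ne h'), ← filter_or]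
  simp only [le_iff_lt_or_eq]

lemma lt_blockStart_add_iff (hg : Monotone g) (hfiber : ∀ t, #{p | g p = t} = a t)
    {p : Fin N} {t : Fin q} : (p : ℕ) < blockStart g t + a t ↔ g p ≤ t := by
  rw [← card_filter_apply_le hfiber]
  exact Fin.lt_card_filter_univ_iff_apply_of_imp _ fun _ _ hji hi => (hg hji).trans hi

lemma card_filter_lt_or_eq_false (w : Fin N → Bool) (t : Fin q) :
    #{p | g p < t ∨ (g p = t ∧ w p = false)} = blockStart g t + fiberCount g w false t := by
  rw [blockStart, fiberCount, filter_or, card_union_of_disjoint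
    (disjoint_filter.2 fun _ _ h h' => h.ne h'.1)]

/-- `{p | g p < t ∨ (g p = t ∧ w p = false)}` is an initial segment. -/
lemma lt_blockStart_add_fiberCount_iff {w : Fin N → Bool} (hg : Monotone g)
    (hgw : MonotoneOnFibers g w) (p : Fin N) :
    (p : ℕ) < blockStart g (g p) + fiberCount g w false (g p) ↔ w p = false := by
  rw [← card_filter_lt_or_eq_false, Fin.lt_card_filter_univ_iff_apply_of_imp]
  · simp
  · rintro i j hji (hi | ⟨hi, hwi⟩)
    · exact .inl ((hg hji).trans_lt hi)
    · rcases (hg hji).lt_or_eq with hj | hj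
      · exact .inl (hj.trans_eq hi)
      · refine .inr ⟨hj.trans hi, ?_⟩
        by_contra hwj
        simpa [hwi] using hgw hji hj (by simpa using hwj)

lemma monotoneOnFibers_wordOfTableau (T : Fin 2 → Fin m → ℕ) :
    MonotoneOnFibers g (wordOfTableau g T) := by
  intro i j hij hgij hi
  simp only [wordOfTableau, decide_eq_true_eq, ← hgij] at hi ⊢
  omega

lemma fiberCount_wordOfTableau_false (hg : Monotone g) (hfiber : ∀ t, #{p | g p = t} = a t)
    {T : Fin 2 → Fin m → ℕ} {t : Fin q} (ht : rowCount T 1 t ≤ a t) :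
    fiberCount g (wordOfTableau g T) false t = rowCount T 1 t := by
  have hN : blockStart g t + a t ≤ N := by
    simpa [card_filter_apply_le hfiber] using card_filter_le univ fun p => g p ≤ t
  have h := card_filter_lt_or_eq_false (g := g) (wordOfTableau g T) t
  rw [filter_congr (q := fun p : Fin N => (p : ℕ) < blockStart g t + rowCount T 1 t),
    Fin.card_filter_val_lt] at h
  · omega
  intro p _
  simp only [wordOfTableau, decide_eq_false_iff_not, not_le]
  constructor
  · rintro (hp | ⟨rfl, hp⟩)
    · exact ((lt_blockStart_iff hg).2 hp).trans_le (Nat.le_add_right _ _)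
    · exact hp
  · intro hp
    rcases ((lt_blockStart_add_iff hg hfiber).1 (by omega) : g p ≤ t).lt_or_eq with hpt | rfl
    · exact .inl hpt
    · exact .inr ⟨rfl, hp⟩

namespace IsSSYT

variable {T : Fin 2 → Fin m → ℕ} (hT : IsSSYT q a T) (hg : Monotone g)
  (hfiber : ∀ t, #{p | g p = t} = a t)
include hT hg hfiber

lemma fiberCount_wordOfTableau_true (t : Fin q) :
    fiberCount g (wordOfTableau g T) true t = rowCount T 0 t := by
  have h := fiberCount_true_add_false g (wordOfTableau g T) t
  rw [fiberCount_wordOfTableau_false hg hfiber (hT.rowCount_one_le t), hfiber,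
    ← hT.entryCount_eq, entryCount_eq_rowCount_add] at h
  omega

lemma countBefore_wordOfTableau_end (b : Bool) : countBefore (wordOfTableau g T) b N = m := by
  have h := sum_fiberCount g (wordOfTableau g T) b univ
  simp only [mem_univ, true_and] at h
  rw [countBefore_end, positions, ← h]
  cases b
  · exact (sum_congr rfl fun t _ => fiberCount_wordOfTableau_false hg hfiber
      (hT.rowCount_one_le t)).trans (hT.sum_rowCount 1)
  · exact (sum_congr rfl fun t _ => hT.fiberCount_wordOfTableau_true hg hfiber t).trans
      (hT.sum_rowCount 0)

lemma isDyckWord_wordOfTableau : IsDyckWord (wordOfTableau g T) := by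
  set w := wordOfTableau g T
  have hcount := hT.countBefore_wordOfTableau_end hg hfiber
  have hballot : ∀ k, countBefore w false k ≤ countBefore w true k := by
    intro k
    rcases le_or_gt N k with hk | hk
    · rw [countBefore_of_le _ _ hk, countBefore_of_le _ _ hk, hcount, hcount]
    rcases Nat.eq_zero_or_pos k with rfl | hk₀
    · simp [countBefore_zero]
    obtain ⟨p, rfl⟩ : ∃ p : Fin N, k = p + 1 :=
      ⟨⟨k - 1, by omega⟩, (Nat.sub_add_cancel hk₀).symm⟩
    calc countBefore w false (p + 1)
        ≤ ∑ t with t ≤ g p, fiberCount g w false t :=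
          countBefore_le_sum_fiberCount w false hg p
      _ = ∑ t with t ≤ g p, rowCount T 1 t :=
          sum_congr rfl fun t _ => fiberCount_wordOfTableau_false hg hfiber (hT.rowCount_one_le t)
      _ ≤ ∑ t with t < g p, rowCount T 0 t := hT.sum_rowCount_one_le (g p)
      _ = ∑ t with t < g p, fiberCount g w true t :=
          sum_congr rfl fun t _ => (hT.fiberCount_wordOfTableau_true hg hfiber t).symm
      _ ≤ countBefore w true (p + 1) := sum_fiberCount_le_countBefore w true hg p
  exact ⟨fun k => sub_nonneg.2 (by exact_mod_cast hballot k),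
    by rw [height, hcount, hcount, sub_self]⟩

lemma tableauOfWord_wordOfTableau : tableauOfWord m g (wordOfTableau g T) = T := by
  have h : ∀ b, #(positions (wordOfTableau g T) b) = m := fun b => by
    rw [← countBefore_end, hT.countBefore_wordOfTableau_end hg hfiber]
  funext i
  fin_cases i
  · show rowOfWord m g _ true = T 0
    refine eq_of_monotone_of_card_eq (monotone_rowOfWord (h true) hg) (hT.monotone_row 0)
      (rowOfWord_bounds (h true)) (hT.bounds 0) fun t => ?_
    rw [card_rowOfWord_eq (h true), hT.fiberCount_wordOfTableau_true hg hfiber]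
    rfl
  · show rowOfWord m g _ false = T 1
    refine eq_of_monotone_of_card_eq (monotone_rowOfWord (h false) hg) (hT.monotone_row 1)
      (rowOfWord_bounds (h false)) (hT.bounds 1) fun t => ?_
    rw [card_rowOfWord_eq (h false),
      fiberCount_wordOfTableau_false hg hfiber (hT.rowCount_one_le t)]
    rfl

end IsSSYT

lemma IsDyckWord.wordOfTableau_tableauOfWord {w : Fin N → Bool} (hw : IsDyckWord w)
    (hNm : N = 2 * m) (hg : Monotone g) (hgw : MonotoneOnFibers g w) :
    wordOfTableau g (tableauOfWord m g w) = w := by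
  funext p
  have h := lt_blockStart_add_fiberCount_iff hg hgw p
  rw [← rowCount_tableauOfWord_one (hw.card_positions hNm false)] at h
  rw [wordOfTableau]
  by_cases hwp : w p = false
  · rw [hwp, decide_eq_false_iff_not, not_le]
    exact h.2 hwp
  · rw [Bool.not_eq_false] at hwp
    rw [hwp, decide_eq_true_eq, ← not_lt]
    exact fun hlt => by simp [h.1 hlt] at hwp

noncomputable def ssytEquivWord (hNm : N = 2 * m) (hg : Monotone g)
    (hfiber : ∀ t, #{p | g p = t} = a t) :
    {T : Fin 2 → Fin m → ℕ // IsSSYT q a T} ≃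
      {w : Fin N → Bool // IsDyckWord w ∧ MonotoneOnFibers g w} where
  toFun T := ⟨wordOfTableau g T.1, T.2.isDyckWord_wordOfTableau hg hfiber,
    monotoneOnFibers_wordOfTableau T.1⟩
  invFun w := ⟨tableauOfWord m g w, w.2.1.isSSYT_tableauOfWord hNm hg w.2.2 hfiber⟩
  left_inv T := Subtype.ext (T.2.tableauOfWord_wordOfTableau hg hfiber)
  right_inv w := Subtype.ext (w.2.1.wordOfTableau_tableauOfWord hNm hg w.2.2)

end tableau

end SSYTMatching

theorem ssyt_equiv_grouped_noncrossing_matchings_general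
    (d q : ℕ) (a : Fin q → ℕ)
    (g : Fin (2 * d - 2) → Fin q) (hg : Monotone g)
    (hfiber : ∀ j, (Finset.univ.filter fun i => g i = j).card = a j) :
    Nonempty
      ({T : Fin 2 → Fin (d - 1) → ℕ //
          (∀ i, Monotone (T i)) ∧
          (∀ j, T 0 j < T 1 j) ∧
          (∀ j : Fin q, entryCount T ((j : ℕ) + 1) = a j) ∧
          (∀ i j, 1 ≤ T i j ∧ T i j ≤ q)} ≃
       {f : Fin (2 * d - 2) → Fin (2 * d - 2) //
          NoncrossingMatching f ∧ ∀ i, g (f i) ≠ g i}) :=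
  ⟨(Equiv.subtypeEquivRight fun _ => SSYTMatching.isSSYT_iff.symm).trans <|
    (SSYTMatching.ssytEquivWord (by omega) hg hfiber).trans
      (SSYTMatching.matchingEquivWord hg).symm⟩

/-- (Lemma 3, Part A/B.) Semistandard Young tableaux of shape `2 × (d-1)`
with content `(a 1, …, a q)` are in bijection with non-crossing perfect matchings on
`2d - 2` linearly ordered points grouped into consecutive blocks of sizes `a 1, …, a q`
(encoded by a monotone grouping map `g` with fiber sizes `a j`) having no chord joining two
points of the same block. -/
theorem ssyt_equiv_grouped_noncrossing_matchings
    (d q : ℕ) (hd : 1 ≤ d) (a : Fin q → ℕ)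
    (ha : ∀ j, 1 ≤ a j) (hsum : ∑ j, a j = 2 * d - 2)
    (g : Fin (2 * d - 2) → Fin q) (hg : Monotone g)
    (hfiber : ∀ j, (Finset.univ.filter fun i => g i = j).card = a j) :
    Nonempty
      ({T : Fin 2 → Fin (d - 1) → ℕ //
          (∀ i, Monotone (T i)) ∧
          (∀ j, T 0 j < T 1 j) ∧
          (∀ j : Fin q, entryCount T ((j : ℕ) + 1) = a j) ∧
          (∀ i j, 1 ≤ T i j ∧ T i j ≤ q)} ≃
       {f : Fin (2 * d - 2) → Fin (2 * d - 2) //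
          NoncrossingMatching f ∧ ∀ i, g (f i) ≠ g i}) :=
  ssyt_equiv_grouped_noncrossing_matchings_general d q a g hg hfiber
end

section
/- Let f = P/Q be a complex rational function of degree d and W the projective subspace of P^d spanned by E(z_0), ..., E(z_a), where E(z) = (1 : z : ... : z^d) and z_0,...,z_a are distinct complex numbers, none a pole of f. Let X ⊂ P^d be the codimension-2 subspace cut out by the two linear equations whose coefficient vectors are the coefficient vectors of P and Q. Then dim(X ∩ W) ≥ a - 1 if and only if f(z_0) = f(z_1) = ... = f(z_a). -/
/-!
Restricted to `W`, the map `x ↦ B x` has kernel `X ∩ W`, and it sends `E(z)` to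
`(P(z), Q(z))`. The vectors `E(z_0), …, E(z_a)` are independent (Vandermonde), so by rank–nullity
`dim (X ∩ W) ≥ a` iff the points `(P(z_k), Q(z_k))` span at most a line of `ℂ²`. As no
`Q(z_k)` vanishes, this happens exactly when all the ratios `P(z_k) / Q(z_k)` agree.
-/

open Polynomial Module Submodule Set
open scoped Matrix

theorem linearIndependent_pow_of_injective {K : Type*} [Field K] {m n : ℕ} (hmn : m ≤ n)
    {z : Fin m → K} (hz : Function.Injective z) :
    LinearIndependent K fun k (j : Fin n) => z k ^ (j : ℕ) := by
  have hrows : LinearIndependent K (Matrix.vandermonde z).row := by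
    rwa [Matrix.linearIndependent_rows_iff_isUnit, Matrix.isUnit_iff_isUnit_det,
      isUnit_iff_ne_zero, Matrix.det_vandermonde_ne_zero_iff]
  exact .of_comp (LinearMap.funLeft K K (Fin.castLE hmn)) hrows

theorem Matrix.mulVec_pow_apply {R m : Type*} [CommRing R] {n : ℕ} (B : Matrix m (Fin n) R)
    (t : R) (i : m) :
    (B *ᵥ fun j => t ^ (j : ℕ)) i = (∑ j : Fin n, C (B i j) * X ^ (j : ℕ)).eval t := by
  simp [Matrix.mulVec, dotProduct, eval_finsetSum]

section

variable {K : Type*} [Field K]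

theorem LinearMap.finrank_ker_inf_add_finrank_map {V M : Type*} [AddCommGroup V] [Module K V]
    [AddCommGroup M] [Module K M] (L : V →ₗ[K] M) (W : Submodule K V) [FiniteDimensional K W] :
    finrank K ↥(ker L ⊓ W) + finrank K ↥(W.map L) = finrank K W := by
  have hker : comap W.subtype (ker L) = comap W.subtype (ker L ⊓ W) := by
    ext x
    simp
  rw [← (L.domRestrict W).finrank_range_add_finrank_ker, range_domRestrict, ker_domRestrict,
    add_comm, hker, (comapSubtypeEquivOfLe inf_le_right).finrank_eq]

theorem finrank_span_le_one_iff_div_eq {ι : Type*} (w : ι → Fin 2 → K) (hw : ∀ k, w k 1 ≠ 0) :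
    finrank K (span K (range w)) ≤ 1 ↔ ∀ k l, w k 0 / w k 1 = w l 0 / w l 1 := by
  constructor
  · intro h k l
    obtain ⟨g, hg⟩ := finrank_le_one_iff.mp h
    obtain ⟨c, hc⟩ := hg ⟨w k, subset_span ⟨k, rfl⟩⟩
    obtain ⟨c', hc'⟩ := hg ⟨w l, subset_span ⟨l, rfl⟩⟩
    have hk : c • (g : Fin 2 → K) = w k := congrArg Subtype.val hc
    have hl : c' • (g : Fin 2 → K) = w l := congrArg Subtype.val hc'
    rw [div_eq_div_iff (hw k) (hw l), ← hk, ← hl]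
    simp only [Pi.smul_apply, smul_eq_mul]
    ring
  · intro h
    rcases isEmpty_or_nonempty ι with hι | ⟨⟨k₀⟩⟩
    · rw [range_eq_empty w, span_empty, finrank_bot]
      exact zero_le_one
    · have hle : span K (range w) ≤ K ∙ ![w k₀ 0 / w k₀ 1, 1] := by
        rw [span_le]
        rintro _ ⟨k, rfl⟩
        refine mem_span_singleton.mpr ⟨w k 1, funext fun i => ?_⟩
        fin_cases i
        · simp [← h k k₀, mul_div_cancel₀ _ (hw k)]
        · simp
      exact (Submodule.finrank_mono hle).trans (finrank_span_le_card _ |>.trans (by simp))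

end

theorem codim_two_meets_span_iff_constant_general
    (d a : ℕ) (B : Matrix (Fin 2) (Fin (d + 1)) ℂ)
    (P Q : Polynomial ℂ)
    (hP : P = ∑ j : Fin (d + 1), Polynomial.C (B 0 j) * X ^ (j : ℕ))
    (hQ : Q = ∑ j : Fin (d + 1), Polynomial.C (B 1 j) * X ^ (j : ℕ))
    (z : Fin (a + 1) → ℂ) (hz : Function.Injective z) (had : a ≤ d)
    (hpole : ∀ k, Q.eval (z k) ≠ 0)
    (Xsub Wsub : Submodule ℂ (Fin (d + 1) → ℂ))
    (hX : Xsub = LinearMap.ker B.mulVecLin)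
    (hW : Wsub = Submodule.span ℂ
      (Set.range fun k : Fin (a + 1) => fun j : Fin (d + 1) => z k ^ (j : ℕ))) :
    a ≤ Module.finrank ℂ ↥(Xsub ⊓ Wsub) ↔
      ∀ k l : Fin (a + 1), P.eval (z k) / Q.eval (z k) = P.eval (z l) / Q.eval (z l) := by
  subst hP hQ hX hW
  set v : Fin (a + 1) → Fin (d + 1) → ℂ := fun k j => z k ^ (j : ℕ)
  have hrank := B.mulVecLin.finrank_ker_inf_add_finrank_map (span ℂ (range v))
  rw [finrank_span_eq_card (linearIndependent_pow_of_injective (by omega) hz), Fintype.card_fin,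
    map_span, ← range_comp] at hrank
  have hw : ∀ k, (B.mulVecLin ∘ v) k 1 ≠ 0 := by
    simpa [v, Matrix.mulVec_pow_apply] using hpole
  refine .trans ?_ ((finrank_span_le_one_iff_div_eq _ hw).trans ?_)
  · omega
  · simp [v, Matrix.mulVec_pow_apply]

/-- Let `f = P/Q` be a rational function of degree `d` (with `P`, `Q`
coprime, `max (deg P) (deg Q) = d`), let `X` be the codimension-2 projective subspace of
`P^d` cut out by the two linear forms with coefficient vectors those of `P` and `Q`
(realized as the kernel of `B.mulVecLin` in `ℂ^{d+1}`), and let `W` be the projective span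
of the points `E (z 0), …, E (z a)` of the rational normal curve, for distinct `z k`, none a
pole of `f` (realized as the linear span of the Vandermonde vectors). Then the projective
dimension of `X ∩ W` is `≥ a - 1` (i.e. its linear dimension is `≥ a`) iff
`f (z 0) = ⋯ = f (z a)`. -/
theorem codim_two_meets_span_iff_constant
    (d a : ℕ) (B : Matrix (Fin 2) (Fin (d + 1)) ℂ)
    (P Q : Polynomial ℂ)
    (hP : P = ∑ j : Fin (d + 1), Polynomial.C (B 0 j) * X ^ (j : ℕ))
    (hQ : Q = ∑ j : Fin (d + 1), Polynomial.C (B 1 j) * X ^ (j : ℕ))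
    (hcop : IsCoprime P Q)
    (hdeg : max P.natDegree Q.natDegree = d)
    (z : Fin (a + 1) → ℂ) (hz : Function.Injective z) (had : a ≤ d)
    (hpole : ∀ k, Q.eval (z k) ≠ 0)
    (Xsub Wsub : Submodule ℂ (Fin (d + 1) → ℂ))
    (hX : Xsub = LinearMap.ker B.mulVecLin)
    (hW : Wsub = Submodule.span ℂ
      (Set.range fun k : Fin (a + 1) => fun j : Fin (d + 1) => z k ^ (j : ℕ))) :
    a ≤ Module.finrank ℂ ↥(Xsub ⊓ Wsub) ↔
      ∀ k l : Fin (a + 1), P.eval (z k) / Q.eval (z k) = P.eval (z l) / Q.eval (z l) :=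
  codim_two_meets_span_iff_constant_general d a B P Q hP hQ z hz had hpole Xsub Wsub hX hW
end
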